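/- arXiv:2005.10042 — 3 statements merged into one kernel-verified Lean document; each statement's English description precedes it below -/
import Mathlib

section
/- If k_i = O(i) and (q_i) is bounded, then every solution y of the silicosis system on [0,T) has components x and M_i of class C¹ on [0,T), and the differential equations Ṁ_0 = r − k_0 x M_0 − (p_0+q_0)M_0, Ṁ_i = k_{i−1} x M_{i−1} − k_i x M_i − (p_i+q_i)M_i, ẋ = α − x Σ k_i M_i + Σ i q_i M_i hold in the classical pointwise sense for all t ∈ [0,T). -/
/-!
Weighting the `i`-th equation by `i + 1` and summing, the aggregation terms telescope, so the
first moment `S = ∑ (i + 1) Mᵢ` satisfies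
`S t = S 0 + r t + ∫₀ᵗ (x ∑ kᵢ Mᵢ - ∑ (i + 1) (pᵢ + qᵢ) Mᵢ)`, and `S` is continuous.
Since `kᵢ` and `i qᵢ` are `O(i + 1)`, the series `∑ kᵢ Mᵢ` and `∑ i qᵢ Mᵢ` are dominated termwise
by multiples of the series of `S`, hence continuous as well. All right-hand sides are then
continuous, and the integrated equations can be differentiated by the fundamental theorem of
calculus.
-/

open MeasureTheory Set Filter

noncomputable section

/-- A solution of the silicosis system (Definition 2.2) on the time domain `D`
(`D = Set.Ico 0 T` or `D = Set.Ici 0`): componentwise continuous, nonnegative,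
with locally bounded norm `‖y(t)‖ = x(t) + ∑ (i+1) Mᵢ(t)`, the integrability
conditions, and the integrated versions of the equations. -/
structure IsSol (k p q : ℕ → ℝ) (r α : ℝ) (D : Set ℝ) (x : ℝ → ℝ) (M : ℕ → ℝ → ℝ) : Prop where
  x_nonneg : ∀ t ∈ D, 0 ≤ x t
  M_nonneg : ∀ (i : ℕ), ∀ t ∈ D, 0 ≤ M i t
  x_cont : ContinuousOn x D
  M_cont : ∀ i : ℕ, ContinuousOn (M i) D
  summable_norm : ∀ t ∈ D, Summable (fun i : ℕ => ((i : ℝ) + 1) * M i t)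
  norm_bdd : ∀ T' : ℝ, Icc (0:ℝ) T' ⊆ D →
    ∃ C : ℝ, ∀ t ∈ Icc (0:ℝ) T', x t + ∑' i : ℕ, ((i : ℝ) + 1) * M i t ≤ C
  summable_mom : ∀ t ∈ D,
    Summable (fun i : ℕ => ((i : ℝ) * p i + (i : ℝ) * q i + k i) * M i t)
  x_int : ∀ t ∈ D, IntervalIntegrable x volume 0 t
  mom_int : ∀ t ∈ D,
    IntervalIntegrable (fun s => ∑' i : ℕ, ((i : ℝ) * p i + (i : ℝ) * q i + k i) * M i s)
      volume 0 t
  eq_M0 : ∀ t ∈ D,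
    M 0 t = M 0 0 + r * t - ∫ s in (0:ℝ)..t, (k 0 * x s * M 0 s + (p 0 + q 0) * M 0 s)
  eq_M : ∀ i : ℕ, 1 ≤ i → ∀ t ∈ D,
    M i t = M i 0 + ∫ s in (0:ℝ)..t,
      (k (i-1) * x s * M (i-1) s - k i * x s * M i s - (p i + q i) * M i s)
  eq_x : ∀ t ∈ D,
    x t = x 0 + α * t + ∫ s in (0:ℝ)..t,
      (-(x s * ∑' i : ℕ, k i * M i s) + ∑' i : ℕ, (i : ℝ) * q i * M i s)

open Topology
open scoped Interval

theorem Summable.eq_zero_of_tendsto_succ_mul {a : ℕ → ℝ} {L : ℝ} (ha : Summable a)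
    (h : Tendsto (fun n : ℕ => ((n : ℝ) + 1) * a n) atTop (𝓝 L)) : L = 0 := by
  by_contra hL
  have hinv : (fun n : ℕ => (((n : ℝ) + 1) * a n)⁻¹) =O[atTop] (fun _ => (1 : ℝ)) :=
    (h.inv₀ hL).isBigO_one ℝ
  have hharm : (fun n : ℕ => 1 / ((n : ℝ) + 1)) =O[atTop] a := by
    refine (hinv.mul (Asymptotics.isBigO_refl a atTop)).congr' ?_ (by simp)
    filter_upwards [h.eventually_ne hL] with n hn
    field_simp [right_ne_zero_of_mul hn]
  exact Real.not_summable_one_div_natCast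
    ((summable_nat_add_iff 1).1 (by exact_mod_cast summable_of_isBigO_nat ha hharm))

theorem sum_range_succ_mul_of_telescoping {a c d : ℕ → ℝ} {ρ : ℝ}
    (hd0 : d 0 = ρ - a 0 - c 0) (hd : ∀ i, d (i + 1) = a i - a (i + 1) - c (i + 1)) (m : ℕ) :
    ∑ i ∈ Finset.range (m + 1), ((i : ℝ) + 1) * d i
      = ρ + ∑ j ∈ Finset.range m, a j - ((m : ℝ) + 1) * a m
        - ∑ i ∈ Finset.range (m + 1), ((i : ℝ) + 1) * c i := by
  induction m with
  | zero => simp [hd0]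
  | succ m ih =>
    rw [Finset.sum_range_succ, ih, hd, Finset.sum_range_succ a, Finset.sum_range_succ _ (m + 1)]
    push_cast
    ring

/-- The boundary term `(m + 1) a m` of the partial sums converges because everything else does,
and its limit is `0` because `a` is summable. -/
theorem HasSum.succ_mul_of_telescoping {a c d : ℕ → ℝ} {ρ A C : ℝ} (ha : HasSum a A)
    (hc : HasSum (fun i : ℕ => ((i : ℝ) + 1) * c i) C)
    (hd : Summable fun i : ℕ => ((i : ℝ) + 1) * d i)
    (hd0 : d 0 = ρ - a 0 - c 0) (hds : ∀ i, d (i + 1) = a i - a (i + 1) - c (i + 1)) :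
    HasSum (fun i : ℕ => ((i : ℝ) + 1) * d i) (ρ + A - C) := by
  set D := ∑' i : ℕ, ((i : ℝ) + 1) * d i
  have succ : ∀ {f : ℕ → ℝ} {F : ℝ}, HasSum f F →
      Tendsto (fun m => ∑ i ∈ Finset.range (m + 1), f i) atTop (𝓝 F) := fun hf =>
    hf.tendsto_sum_nat.comp (tendsto_add_atTop_nat 1)
  have hbdry : Tendsto (fun m : ℕ => ((m : ℝ) + 1) * a m) atTop (𝓝 (ρ + A - C - D)) := by
    refine (((tendsto_const_nhds.add ha.tendsto_sum_nat).sub (succ hc)).sub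
      (succ hd.hasSum)).congr fun m => ?_
    rw [sum_range_succ_mul_of_telescoping hd0 hds]
    ring
  have := ha.summable.eq_zero_of_tendsto_succ_mul hbdry
  rw [show ρ + A - C = D by linarith]
  exact hd.hasSum

section Semicontinuity

variable {X : Type*} [TopologicalSpace X] {s : Set X}

theorem lowerSemicontinuousOn_tsum_of_nonneg {f : ℕ → X → ℝ} (hf : ∀ i, ContinuousOn (f i) s)
    (h0 : ∀ i, ∀ x ∈ s, 0 ≤ f i x) (hs : ∀ x ∈ s, Summable fun i => f i x) :
    LowerSemicontinuousOn (fun x => ∑' i, f i x) s := by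
  intro x₀ hx₀ y hy
  obtain ⟨n, hn⟩ := ((hs x₀ hx₀).hasSum.tendsto_sum_nat.eventually (lt_mem_nhds hy)).exists
  have hpartial : ContinuousWithinAt (fun x => ∑ i ∈ Finset.range n, f i x) s x₀ :=
    continuousOn_finsetSum _ (fun i _ => hf i) x₀ hx₀
  filter_upwards [hpartial.eventually (lt_mem_nhds hn), self_mem_nhdsWithin] with x hlt hx
  exact hlt.trans_le ((hs x hx).sum_le_tsum _ fun i _ => h0 i x hx)

/-- Both `∑ f` and `∑ (g - f)` are lower semicontinuous, and they add up to the continuous `∑ g`. -/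
theorem continuousOn_tsum_of_le {f g : ℕ → X → ℝ} (hf : ∀ i, ContinuousOn (f i) s)
    (hg : ∀ i, ContinuousOn (g i) s) (h0 : ∀ i, ∀ x ∈ s, 0 ≤ f i x)
    (hfg : ∀ i, ∀ x ∈ s, f i x ≤ g i x) (hgs : ∀ x ∈ s, Summable fun i => g i x)
    (hG : ContinuousOn (fun x => ∑' i, g i x) s) :
    ContinuousOn (fun x => ∑' i, f i x) s := by
  have hfs : ∀ x ∈ s, Summable fun i => f i x := fun x hx =>
    (hgs x hx).of_nonneg_of_le (fun i => h0 i x hx) (fun i => hfg i x hx)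
  have hdiff : ∀ x ∈ s, ∑' i, (g i x - f i x) = ∑' i, g i x - ∑' i, f i x := fun x hx =>
    (hgs x hx).tsum_sub (hfs x hx)
  have hlsc_f := lowerSemicontinuousOn_tsum_of_nonneg hf h0 hfs
  have hlsc_gf := lowerSemicontinuousOn_tsum_of_nonneg (f := fun i x => g i x - f i x)
    (fun i => (hg i).sub (hf i)) (fun i x hx => sub_nonneg.2 (hfg i x hx))
    (fun x hx => (hgs x hx).sub (hfs x hx))
  intro x₀ hx₀
  refine tendsto_order.2 ⟨fun y hy => hlsc_f x₀ hx₀ y hy, fun y hy => ?_⟩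
  set δ := y - ∑' i, f i x₀
  have hG' := (hG x₀ hx₀).eventually (gt_mem_nhds (show _ < ∑' i, g i x₀ + δ / 2 by linarith))
  have hGF := hlsc_gf x₀ hx₀ (∑' i, (g i x₀ - f i x₀) - δ / 2) (by simp only; linarith)
  filter_upwards [hG', hGF, self_mem_nhdsWithin] with x h1 h2 hx
  simp only [hdiff x hx, hdiff x₀ hx₀] at h2
  linarith

end Semicontinuity

section IntervalIntegral

variable {a b T t : ℝ}

theorem IntervalIntegrable.tsum_of_norm_le {f : ℕ → ℝ → ℝ} {g : ℝ → ℝ}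
    (hf : ∀ i, IntervalIntegrable (f i) volume a b) (hs : ∀ s ∈ Ι a b, Summable fun i => f i s)
    (hle : ∀ s ∈ Ι a b, ‖∑' i, f i s‖ ≤ g s) (hg : IntervalIntegrable g volume a b) :
    IntervalIntegrable (fun s => ∑' i, f i s) volume a b := by
  simp only [intervalIntegrable_iff] at hf hg ⊢
  have hmeas : AEStronglyMeasurable (fun s => ∑' i, f i s) (volume.restrict (Ι a b)) :=
    aestronglyMeasurable_of_tendsto_ae atTop
      (fun n => (integrable_finsetSum _ fun i _ => hf i).aestronglyMeasurable)
      (ae_restrict_of_forall_mem measurableSet_uIoc fun s hs' =>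
        (hs s hs').hasSum.tendsto_sum_nat)
  exact hg.mono' hmeas (ae_restrict_of_forall_mem measurableSet_uIoc hle)

theorem intervalIntegral.hasSum_integral_of_nonneg {f : ℕ → ℝ → ℝ}
    (hf : ∀ i, IntervalIntegrable (f i) volume a b) (h0 : ∀ i, ∀ s ∈ Ι a b, 0 ≤ f i s)
    (hs : ∀ s ∈ Ι a b, Summable fun i => f i s)
    (hint : IntervalIntegrable (fun s => ∑' i, f i s) volume a b) :
    HasSum (fun i => ∫ s in a..b, f i s) (∫ s in a..b, ∑' i, f i s) :=
  hasSum_integral_of_dominated_convergence f (fun i => (hf i).def'.aestronglyMeasurable)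
    (fun i => ae_of_all _ fun s hs => (Real.norm_of_nonneg (h0 i s hs)).le) (ae_of_all _ hs) hint
    (ae_of_all _ fun s hs' => (hs s hs').hasSum)

theorem uIoc_subset_Ico_of_mem (ht : t ∈ Ico a T) : Ι a t ⊆ Ico a T := by
  rw [uIoc_of_le ht.1]
  exact Ioc_subset_Icc_self.trans (Icc_subset_Ico_right ht.2)

theorem Icc_mem_nhdsWithin_Ico_of_lt (ht : t < b) : Icc a b ∈ 𝓝[Ico a T] t :=
  mem_nhdsWithin.2 ⟨Iio b, isOpen_Iio, ht, fun _ hs => ⟨hs.2.1, hs.1.le⟩⟩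

theorem ContinuousOn.intervalIntegrable_of_Ico {f : ℝ → ℝ} (hf : ContinuousOn f (Ico a T))
    (ht : t ∈ Ico a T) : IntervalIntegrable f volume a t :=
  (hf.mono ((uIcc_of_le ht.1).trans_subset (Icc_subset_Ico_right ht.2))).intervalIntegrable

theorem continuousOn_primitive_Ico {f : ℝ → ℝ}
    (hf : ∀ u ∈ Ico a T, IntervalIntegrable f volume a u) :
    ContinuousOn (fun u => ∫ s in a..u, f s) (Ico a T) := by
  intro t ht
  obtain ⟨b, htb, hbT⟩ := exists_between ht.2
  have hab : a ≤ b := ht.1.trans htb.le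
  have hcont := intervalIntegral.continuousOn_primitive_interval' (hf b ⟨hab, hbT⟩) left_mem_uIcc
  rw [uIcc_of_le hab] at hcont
  exact (hcont t ⟨ht.1, htb.le⟩).mono_of_mem_nhdsWithin (Icc_mem_nhdsWithin_Ico_of_lt htb)

theorem hasDerivWithinAt_primitive_Ico {f : ℝ → ℝ} (hf : ContinuousOn f (Ico a T))
    (ht : t ∈ Ico a T) :
    HasDerivWithinAt (fun u => ∫ s in a..u, f s) (f t) (Ico a T) t := by
  obtain ⟨b, htb, hbT⟩ := exists_between ht.2
  have hsub : Icc a b ⊆ Ico a T := Icc_subset_Ico_right hbT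
  have : Fact (t ∈ Icc a b) := ⟨⟨ht.1, htb.le⟩⟩
  exact (intervalIntegral.integral_hasDerivWithinAt_right (hf.intervalIntegrable_of_Ico ht)
    ((hf.mono hsub).stronglyMeasurableAtFilter_nhdsWithin measurableSet_Icc t)
    ((hf.mono hsub) t this.out)).mono_of_mem_nhdsWithin (Icc_mem_nhdsWithin_Ico_of_lt htb)

end IntervalIntegral

/-- The series `∑ momentWeight k p q i * Mᵢ t` is controlled by a solution: `summable_mom` and
`mom_int` cover `i pᵢ + i qᵢ + kᵢ`, and `summable_norm` and `norm_bdd` cover `i + 1`. -/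
def momentWeight (k p q : ℕ → ℝ) (i : ℕ) : ℝ :=
  (i : ℝ) * p i + (i : ℝ) * q i + k i + ((i : ℝ) + 1)

section MomentWeight

variable {k p q : ℕ → ℝ} {i : ℕ}

theorem k_le_momentWeight (hp : 0 ≤ p i) (hq : 0 ≤ q i) : k i ≤ momentWeight k p q i := by
  have := i.cast_nonneg (α := ℝ)
  unfold momentWeight
  nlinarith

theorem succ_mul_add_le_momentWeight (hk : ∀ i, 0 ≤ k i) (hp : ∀ i, 0 ≤ p i)
    (hq : ∀ i, 0 ≤ q i) : ((i : ℝ) + 1) * (p i + q i) ≤ (2 + p 0 + q 0) * momentWeight k p q i := by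
  have hpq0 : 0 ≤ p 0 + q 0 := add_nonneg (hp 0) (hq 0)
  unfold momentWeight
  rcases i with _ | i
  · simp only [Nat.cast_zero, zero_mul, zero_add]
    nlinarith [mul_nonneg hpq0 (hk 0), hk 0]
  · have hi := i.cast_nonneg (α := ℝ)
    have hw : 0 ≤ ((i + 1 : ℕ) : ℝ) * p (i + 1) + ((i + 1 : ℕ) : ℝ) * q (i + 1) + k (i + 1)
        + (((i + 1 : ℕ) : ℝ) + 1) := by
      have := hk (i + 1); have := hp (i + 1); have := hq (i + 1); positivity
    have := mul_nonneg hpq0 hw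
    have := mul_nonneg hi (add_nonneg (hp (i + 1)) (hq (i + 1)))
    push_cast at hw this ⊢
    nlinarith [hk (i + 1)]

end MomentWeight

namespace IsSol

variable {k p q : ℕ → ℝ} {r α T : ℝ} {x : ℝ → ℝ} {M : ℕ → ℝ → ℝ}

theorem continuousOn_kxM (hsol : IsSol k p q r α (Ico 0 T) x M) (j : ℕ) :
    ContinuousOn (fun s => k j * x s * M j s) (Ico 0 T) :=
  (continuousOn_const.mul hsol.x_cont).mul (hsol.M_cont j)

theorem continuousOn_const_mul_M (hsol : IsSol k p q r α (Ico 0 T) x M) (c : ℝ) (i : ℕ) :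
    ContinuousOn (fun s => c * M i s) (Ico 0 T) :=
  continuousOn_const.mul (hsol.M_cont i)

theorem intervalIntegrable_first_moment (hsol : IsSol k p q r α (Ico 0 T) x M) {t : ℝ}
    (ht : t ∈ Ico 0 T) :
    IntervalIntegrable (fun s => ∑' i : ℕ, ((i : ℝ) + 1) * M i s) volume 0 t := by
  obtain ⟨C, hC⟩ := hsol.norm_bdd t (Icc_subset_Ico_right ht.2)
  refine IntervalIntegrable.tsum_of_norm_le (g := fun _ => C)
    (fun i => (hsol.continuousOn_const_mul_M _ i).intervalIntegrable_of_Ico ht)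
    (fun s hs => hsol.summable_norm s (uIoc_subset_Ico_of_mem ht hs)) (fun s hs => ?_)
    intervalIntegrable_const
  have hsD := uIoc_subset_Ico_of_mem ht hs
  have hst : s ∈ Icc 0 t := Ioc_subset_Icc_self (uIoc_of_le ht.1 ▸ hs)
  rw [Real.norm_of_nonneg
    (tsum_nonneg fun i => mul_nonneg (by positivity) (hsol.M_nonneg i s hsD))]
  linarith [hC s hst, hsol.x_nonneg s hsD]

theorem summable_mul_of_le_momentWeight (hsol : IsSol k p q r α (Ico 0 T) x M) {w : ℕ → ℝ}
    {C : ℝ} (hw0 : ∀ i, 0 ≤ w i) (hw : ∀ i, w i ≤ C * momentWeight k p q i) {t : ℝ}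
    (ht : t ∈ Ico 0 T) : Summable fun i => w i * M i t := by
  refine (((hsol.summable_mom t ht).add (hsol.summable_norm t ht)).mul_left C).of_nonneg_of_le
    (fun i => mul_nonneg (hw0 i) (hsol.M_nonneg i t ht)) fun i => ?_
  have := mul_le_mul_of_nonneg_right (hw i) (hsol.M_nonneg i t ht)
  unfold momentWeight at this
  linarith

theorem intervalIntegrable_tsum_mul_of_le_momentWeight (hsol : IsSol k p q r α (Ico 0 T) x M)
    {w : ℕ → ℝ} {C : ℝ} (hw0 : ∀ i, 0 ≤ w i) (hw : ∀ i, w i ≤ C * momentWeight k p q i) {t : ℝ}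
    (ht : t ∈ Ico 0 T) : IntervalIntegrable (fun s => ∑' i, w i * M i s) volume 0 t := by
  refine IntervalIntegrable.tsum_of_norm_le
    (fun i => (hsol.continuousOn_const_mul_M _ i).intervalIntegrable_of_Ico ht)
    (fun s hs => hsol.summable_mul_of_le_momentWeight hw0 hw (uIoc_subset_Ico_of_mem ht hs))
    (fun s hs => ?_)
    (((hsol.mom_int t ht).add (hsol.intervalIntegrable_first_moment ht)).const_mul C)
  have hsD := uIoc_subset_Ico_of_mem ht hs
  have hsum := (hsol.summable_mom s hsD).add (hsol.summable_norm s hsD)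
  rw [Real.norm_of_nonneg (tsum_nonneg fun i => mul_nonneg (hw0 i) (hsol.M_nonneg i s hsD)),
    ← (hsol.summable_mom s hsD).tsum_add (hsol.summable_norm s hsD), ← tsum_mul_left]
  refine (hsol.summable_mul_of_le_momentWeight hw0 hw hsD).tsum_le_tsum (fun i => ?_)
    (hsum.mul_left C)
  have := mul_le_mul_of_nonneg_right (hw i) (hsol.M_nonneg i s hsD)
  unfold momentWeight at this
  linarith

theorem intervalIntegrable_x_mul_tsum (hsol : IsSol k p q r α (Ico 0 T) x M)
    (hk : ∀ i, 0 ≤ k i) (hp : ∀ i, 0 ≤ p i) (hq : ∀ i, 0 ≤ q i) {t : ℝ} (ht : t ∈ Ico 0 T) :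
    IntervalIntegrable (fun s => x s * ∑' i, k i * M i s) volume 0 t :=
  (hsol.intervalIntegrable_tsum_mul_of_le_momentWeight (C := 1) hk
    (fun i => (k_le_momentWeight (hp i) (hq i)).trans_eq (one_mul _).symm) ht).continuousOn_mul
    (hsol.x_cont.mono ((uIcc_of_le ht.1).trans_subset (Icc_subset_Ico_right ht.2)))

theorem hasSum_integral_kxM (hsol : IsSol k p q r α (Ico 0 T) x M)
    (hk : ∀ i, 0 ≤ k i) (hp : ∀ i, 0 ≤ p i) (hq : ∀ i, 0 ≤ q i) {t : ℝ} (ht : t ∈ Ico 0 T) :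
    HasSum (fun j => ∫ s in (0 : ℝ)..t, k j * x s * M j s)
      (∫ s in (0 : ℝ)..t, x s * ∑' i, k i * M i s) := by
  have hsum : ∀ s, ∑' i, k i * x s * M i s = x s * ∑' i, k i * M i s := fun s => by
    rw [← tsum_mul_left]
    exact tsum_congr fun i => by ring
  simp_rw [← hsum]
  refine intervalIntegral.hasSum_integral_of_nonneg
    (fun j => (hsol.continuousOn_kxM j).intervalIntegrable_of_Ico ht)
    (fun j s hs => ?_) (fun s hs => ?_) ?_
  · have hsD := uIoc_subset_Ico_of_mem ht hs
    exact mul_nonneg (mul_nonneg (hk j) (hsol.x_nonneg s hsD)) (hsol.M_nonneg j s hsD)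
  · exact ((hsol.summable_mul_of_le_momentWeight (C := 1) hk
      (fun i => (k_le_momentWeight (hp i) (hq i)).trans_eq (one_mul _).symm)
      (uIoc_subset_Ico_of_mem ht hs)).mul_left (x s)).congr fun i => by ring
  · simp_rw [hsum]
    exact hsol.intervalIntegrable_x_mul_tsum hk hp hq ht

theorem intervalIntegrable_loss (hsol : IsSol k p q r α (Ico 0 T) x M)
    (hk : ∀ i, 0 ≤ k i) (hp : ∀ i, 0 ≤ p i) (hq : ∀ i, 0 ≤ q i) {t : ℝ} (ht : t ∈ Ico 0 T) :
    IntervalIntegrable (fun s => ∑' i : ℕ, ((i : ℝ) + 1) * (p i + q i) * M i s) volume 0 t :=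
  hsol.intervalIntegrable_tsum_mul_of_le_momentWeight
    (fun i => mul_nonneg (by positivity) (add_nonneg (hp i) (hq i)))
    (fun i => succ_mul_add_le_momentWeight hk hp hq) ht

theorem hasSum_integral_loss (hsol : IsSol k p q r α (Ico 0 T) x M)
    (hk : ∀ i, 0 ≤ k i) (hp : ∀ i, 0 ≤ p i) (hq : ∀ i, 0 ≤ q i) {t : ℝ} (ht : t ∈ Ico 0 T) :
    HasSum (fun i : ℕ => ((i : ℝ) + 1) * ∫ s in (0 : ℝ)..t, (p i + q i) * M i s)
      (∫ s in (0 : ℝ)..t, ∑' i : ℕ, ((i : ℝ) + 1) * (p i + q i) * M i s) := by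
  have hw0 : ∀ i : ℕ, 0 ≤ ((i : ℝ) + 1) * (p i + q i) := fun i =>
    mul_nonneg (by positivity) (add_nonneg (hp i) (hq i))
  simp_rw [← intervalIntegral.integral_const_mul, ← mul_assoc]
  exact intervalIntegral.hasSum_integral_of_nonneg
    (fun i => (hsol.continuousOn_const_mul_M _ i).intervalIntegrable_of_Ico ht)
    (fun i s hs => mul_nonneg (hw0 i) (hsol.M_nonneg i s (uIoc_subset_Ico_of_mem ht hs)))
    (fun s hs => hsol.summable_mul_of_le_momentWeight hw0
      (fun i => succ_mul_add_le_momentWeight hk hp hq) (uIoc_subset_Ico_of_mem ht hs))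
    (hsol.intervalIntegrable_loss hk hp hq ht)

theorem sub_M_zero (hsol : IsSol k p q r α (Ico 0 T) x M) {t : ℝ} (ht : t ∈ Ico 0 T) :
    M 0 t - M 0 0 = r * t - (∫ s in (0 : ℝ)..t, k 0 * x s * M 0 s)
      - ∫ s in (0 : ℝ)..t, (p 0 + q 0) * M 0 s := by
  rw [hsol.eq_M0 t ht, intervalIntegral.integral_add
    ((hsol.continuousOn_kxM 0).intervalIntegrable_of_Ico ht)
    ((hsol.continuousOn_const_mul_M _ 0).intervalIntegrable_of_Ico ht)]
  ring

theorem sub_M_succ (hsol : IsSol k p q r α (Ico 0 T) x M) {t : ℝ} (ht : t ∈ Ico 0 T) (i : ℕ) :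
    M (i + 1) t - M (i + 1) 0 = (∫ s in (0 : ℝ)..t, k i * x s * M i s)
      - (∫ s in (0 : ℝ)..t, k (i + 1) * x s * M (i + 1) s)
      - ∫ s in (0 : ℝ)..t, (p (i + 1) + q (i + 1)) * M (i + 1) s := by
  have hkxM := fun j => (hsol.continuousOn_kxM j).intervalIntegrable_of_Ico ht
  rw [hsol.eq_M (i + 1) (Nat.le_add_left 1 i) t ht, Nat.add_sub_cancel,
    intervalIntegral.integral_sub ((hkxM i).sub (hkxM (i + 1)))
      ((hsol.continuousOn_const_mul_M _ (i + 1)).intervalIntegrable_of_Ico ht),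
    intervalIntegral.integral_sub (hkxM i) (hkxM (i + 1))]
  ring

theorem first_moment_eq (hsol : IsSol k p q r α (Ico 0 T) x M)
    (hk : ∀ i, 0 ≤ k i) (hp : ∀ i, 0 ≤ p i) (hq : ∀ i, 0 ≤ q i) {t : ℝ} (ht : t ∈ Ico 0 T) :
    ∑' i : ℕ, ((i : ℝ) + 1) * M i t = ∑' i : ℕ, ((i : ℝ) + 1) * M i 0 + r * t
      + ∫ s in (0 : ℝ)..t,
        (x s * ∑' i, k i * M i s - ∑' i : ℕ, ((i : ℝ) + 1) * (p i + q i) * M i s) := by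
  have h0 : (0 : ℝ) ∈ Ico 0 T := ⟨le_rfl, ht.1.trans_lt ht.2⟩
  have hdiff := (hsol.summable_norm t ht).hasSum.sub (hsol.summable_norm 0 h0).hasSum
  simp_rw [← mul_sub] at hdiff
  have hbalance := (hsol.hasSum_integral_kxM hk hp hq ht).succ_mul_of_telescoping
    (hsol.hasSum_integral_loss hk hp hq ht) hdiff.summable (hsol.sub_M_zero ht)
    (hsol.sub_M_succ ht)
  rw [intervalIntegral.integral_sub (hsol.intervalIntegrable_x_mul_tsum hk hp hq ht)
    (hsol.intervalIntegrable_loss hk hp hq ht)]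
  linarith [hdiff.unique hbalance]

theorem continuousOn_first_moment (hsol : IsSol k p q r α (Ico 0 T) x M)
    (hk : ∀ i, 0 ≤ k i) (hp : ∀ i, 0 ≤ p i) (hq : ∀ i, 0 ≤ q i) :
    ContinuousOn (fun t => ∑' i : ℕ, ((i : ℝ) + 1) * M i t) (Ico 0 T) := by
  have hprim := continuousOn_primitive_Ico fun u hu =>
    (hsol.intervalIntegrable_x_mul_tsum hk hp hq hu).sub (hsol.intervalIntegrable_loss hk hp hq hu)
  refine (((continuousOn_const (c := ∑' i : ℕ, ((i : ℝ) + 1) * M i 0)).add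
    ((continuousOn_const (c := r)).mul continuousOn_id)).add hprim).congr fun t ht => ?_
  exact hsol.first_moment_eq hk hp hq ht

theorem continuousOn_tsum_mul_of_le_succ (hsol : IsSol k p q r α (Ico 0 T) x M)
    (hk : ∀ i, 0 ≤ k i) (hp : ∀ i, 0 ≤ p i) (hq : ∀ i, 0 ≤ q i) {w : ℕ → ℝ} {C : ℝ}
    (hw0 : ∀ i, 0 ≤ w i) (hw : ∀ i : ℕ, w i ≤ C * ((i : ℝ) + 1)) :
    ContinuousOn (fun t => ∑' i, w i * M i t) (Ico 0 T) := by
  refine continuousOn_tsum_of_le (g := fun i t => C * ((i : ℝ) + 1) * M i t)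
    (fun i => hsol.continuousOn_const_mul_M _ i) (fun i => hsol.continuousOn_const_mul_M _ i)
    (fun i t ht => mul_nonneg (hw0 i) (hsol.M_nonneg i t ht))
    (fun i t ht => mul_le_mul_of_nonneg_right (hw i) (hsol.M_nonneg i t ht))
    (fun t ht => ((hsol.summable_norm t ht).mul_left C).congr fun i => (mul_assoc _ _ _).symm) ?_
  refine ((continuousOn_const (c := C)).mul
    (hsol.continuousOn_first_moment hk hp hq)).congr fun t _ => ?_
  simp_rw [mul_assoc]
  exact tsum_mul_left

theorem continuousOn_rhs_M (hsol : IsSol k p q r α (Ico 0 T) x M) (i : ℕ) :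
    ContinuousOn (fun t => k (i - 1) * x t * M (i - 1) t - k i * x t * M i t
      - (p i + q i) * M i t) (Ico 0 T) :=
  ((hsol.continuousOn_kxM (i - 1)).sub (hsol.continuousOn_kxM i)).sub
    (hsol.continuousOn_const_mul_M _ i)

theorem hasDerivWithinAt_M_zero (hsol : IsSol k p q r α (Ico 0 T) x M) {t : ℝ}
    (ht : t ∈ Ico 0 T) :
    HasDerivWithinAt (M 0) (r - k 0 * x t * M 0 t - (p 0 + q 0) * M 0 t) (Ico 0 T) t := by
  have hprim := hasDerivWithinAt_primitive_Ico
    (f := fun s => k 0 * x s * M 0 s + (p 0 + q 0) * M 0 s)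
    ((hsol.continuousOn_kxM 0).add (hsol.continuousOn_const_mul_M _ 0)) ht
  have hlin := ((hasDerivWithinAt_id t (Ico 0 T)).const_mul r).const_add (M 0 0)
  refine ((hlin.sub hprim).congr (fun u hu => hsol.eq_M0 u hu) (hsol.eq_M0 t ht)).congr_deriv ?_
  ring

theorem hasDerivWithinAt_M (hsol : IsSol k p q r α (Ico 0 T) x M) {i : ℕ} (hi : 1 ≤ i) {t : ℝ}
    (ht : t ∈ Ico 0 T) :
    HasDerivWithinAt (M i)
      (k (i - 1) * x t * M (i - 1) t - k i * x t * M i t - (p i + q i) * M i t) (Ico 0 T) t :=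
  ((hasDerivWithinAt_primitive_Ico (hsol.continuousOn_rhs_M i) ht).const_add (M i 0)).congr
    (fun u hu => hsol.eq_M i hi u hu) (hsol.eq_M i hi t ht)

theorem hasDerivWithinAt_x (hsol : IsSol k p q r α (Ico 0 T) x M)
    (hW : ContinuousOn (fun t => ∑' i, k i * M i t) (Ico 0 T))
    (hV : ContinuousOn (fun t => ∑' i : ℕ, (i : ℝ) * q i * M i t) (Ico 0 T)) {t : ℝ}
    (ht : t ∈ Ico 0 T) :
    HasDerivWithinAt x
      (α - x t * ∑' i, k i * M i t + ∑' i : ℕ, (i : ℝ) * q i * M i t) (Ico 0 T) t := by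
  have hprim := hasDerivWithinAt_primitive_Ico
    (f := fun s => -(x s * ∑' i, k i * M i s) + ∑' i : ℕ, (i : ℝ) * q i * M i s)
    ((hsol.x_cont.mul hW).neg.add hV) ht
  have hlin := ((hasDerivWithinAt_id t (Ico 0 T)).const_mul α).const_add (x 0)
  refine ((hlin.add hprim).congr (fun u hu => hsol.eq_x u hu) (hsol.eq_x t ht)).congr_deriv ?_
  ring

end IsSol

theorem silicosis_C1_regularity_general
    (k p q : ℕ → ℝ)
    (hk : ∀ i, 0 ≤ k i) (hp : ∀ i, 0 ≤ p i) (hq : ∀ i, 0 ≤ q i)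
    (r α : ℝ)
    (Ck : ℝ) (hkO : ∀ i : ℕ, k i ≤ Ck * ((i : ℝ) + 1))
    (Cq : ℝ) (hqB : ∀ i : ℕ, q i ≤ Cq)
    (T : ℝ) (x : ℝ → ℝ) (M : ℕ → ℝ → ℝ)
    (hsol : IsSol k p q r α (Set.Ico 0 T) x M) :
    -- the equations hold in the classical differential sense on [0,T)
    (∀ t ∈ Set.Ico (0:ℝ) T,
      HasDerivWithinAt (M 0) (r - k 0 * x t * M 0 t - (p 0 + q 0) * M 0 t)
        (Set.Ico 0 T) t ∧
      (∀ i : ℕ, 1 ≤ i →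
        HasDerivWithinAt (M i)
          (k (i-1) * x t * M (i-1) t - k i * x t * M i t - (p i + q i) * M i t)
          (Set.Ico 0 T) t) ∧
      HasDerivWithinAt x
        (α - x t * ∑' i : ℕ, k i * M i t + ∑' i : ℕ, (i : ℝ) * q i * M i t)
        (Set.Ico 0 T) t) ∧
    -- the derivatives are continuous on [0,T)  (so the components are C¹)
    ContinuousOn (fun t => α - x t * ∑' i : ℕ, k i * M i t
      + ∑' i : ℕ, (i : ℝ) * q i * M i t) (Set.Ico 0 T) ∧
    (∀ i : ℕ, 1 ≤ i →
      ContinuousOn (fun t => k (i-1) * x t * M (i-1) t - k i * x t * M i t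
        - (p i + q i) * M i t) (Set.Ico 0 T)) ∧
    ContinuousOn (fun t => r - k 0 * x t * M 0 t - (p 0 + q 0) * M 0 t) (Set.Ico 0 T) := by
  have hCq : 0 ≤ Cq := (hq 0).trans (hqB 0)
  have hW := hsol.continuousOn_tsum_mul_of_le_succ hk hp hq hk hkO
  have hV := hsol.continuousOn_tsum_mul_of_le_succ hk hp hq
    (fun i => mul_nonneg i.cast_nonneg (hq i)) fun i => by
      nlinarith [mul_le_mul_of_nonneg_left (hqB i) i.cast_nonneg]
  refine ⟨fun t ht => ⟨hsol.hasDerivWithinAt_M_zero ht, fun i hi => hsol.hasDerivWithinAt_M hi ht,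
    hsol.hasDerivWithinAt_x hW hV ht⟩, ?_, fun i _ => hsol.continuousOn_rhs_M i, ?_⟩
  · exact (continuousOn_const.sub (hsol.x_cont.mul hW)).add hV
  · exact (continuousOn_const.sub (hsol.continuousOn_kxM 0)).sub
      (hsol.continuousOn_const_mul_M _ 0)

/-- Proposition 6.1: if `kᵢ = O(i)` and `(qᵢ)` is bounded, then the
components of every solution on `[0,T)` are `C¹` on `[0,T)` and satisfy the silicosis
equations in the classical (differential) sense for all `t ∈ [0,T)`. -/
theorem silicosis_C1_regularity
    (k p q : ℕ → ℝ)
    (hk : ∀ i, 0 ≤ k i) (hp : ∀ i, 0 ≤ p i) (hq : ∀ i, 0 ≤ q i)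
    (r α : ℝ) (hr : 0 ≤ r) (hα : 0 ≤ α)
    (Ck : ℝ) (hkO : ∀ i : ℕ, k i ≤ Ck * ((i : ℝ) + 1))
    (Cq : ℝ) (hqB : ∀ i : ℕ, q i ≤ Cq)
    (T : ℝ) (x : ℝ → ℝ) (M : ℕ → ℝ → ℝ)
    (hsol : IsSol k p q r α (Set.Ico 0 T) x M) :
    -- the equations hold in the classical differential sense on [0,T)
    (∀ t ∈ Set.Ico (0:ℝ) T,
      HasDerivWithinAt (M 0) (r - k 0 * x t * M 0 t - (p 0 + q 0) * M 0 t)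
        (Set.Ico 0 T) t ∧
      (∀ i : ℕ, 1 ≤ i →
        HasDerivWithinAt (M i)
          (k (i-1) * x t * M (i-1) t - k i * x t * M i t - (p i + q i) * M i t)
          (Set.Ico 0 T) t) ∧
      HasDerivWithinAt x
        (α - x t * ∑' i : ℕ, k i * M i t + ∑' i : ℕ, (i : ℝ) * q i * M i t)
        (Set.Ico 0 T) t) ∧
    -- the derivatives are continuous on [0,T)  (so the components are C¹)
    ContinuousOn (fun t => α - x t * ∑' i : ℕ, k i * M i t
      + ∑' i : ℕ, (i : ℝ) * q i * M i t) (Set.Ico 0 T) ∧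
    (∀ i : ℕ, 1 ≤ i →
      ContinuousOn (fun t => k (i-1) * x t * M (i-1) t - k i * x t * M i t
        - (p i + q i) * M i t) (Set.Ico 0 T)) ∧
    ContinuousOn (fun t => r - k 0 * x t * M 0 t - (p 0 + q 0) * M 0 t) (Set.Ico 0 T) :=
  silicosis_C1_regularity_general k p q hk hp hq r α Ck hkO Cq hqB T x M hsol
end
end

section
/- Let (p_i), (q_i), (k_i) be nonnegative with p_i = O(1), q_i = O(i), k_i = O(i^γ) for some γ ∈ [0,1]. If y_0 belongs to the weighted positive cone X_+^{1+γ} (i.e., y_0 ≥ 0 and |y_{01}| + Σ_{i≥2}(i−1)^{1+γ}|y_{0i}| < ∞), then the unique solution y of the silicosis system with y(0) = y_0 satisfies y(t) ∈ X_+^{1+γ} for all t > 0. Moreover the weighted norm satisfies the exponential bound y_1(t) + Σ_{i≥2}(i−1)^{1+γ} y_i(t) ≤ C_1 e^{C_2 t} on compacts, with constants depending only on T, the coefficients, and the initial data. -/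
/-!
With the weights `wᵢ = (i+1)^{1+γ}`, the partial sums `∑_{i<N} wᵢ Mᵢ` have right derivative
at most `r + ∑_{j<N} (w_{j+1} - w_j) k_j x M_j` once the loss terms are dropped. Since
`w_{j+1} - w_j = O(j^γ)`, `k_j = O(j^γ)` and `2γ ≤ 1 + γ`, and since `x` is bounded on compacts
by the norm bound of the solution, this is at most `K ∑_{i<N} wᵢ Mᵢ + r`. Grönwall's inequality
then bounds the partial sums uniformly in `N` by `C₁ e^{C₂ t}`.
-/

open MeasureTheory Set Filter

noncomputable section

theorem Real.add_one_rpow_sub_rpow_le {a γ : ℝ} (ha : 0 ≤ a) (hγ : 0 ≤ γ) :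
    (a + 1) ^ (1 + γ) - a ^ (1 + γ) ≤ (1 + γ) * (a + 1) ^ γ := by
  obtain ⟨c, hc, hslope⟩ := exists_hasDerivAt_eq_slope (fun z : ℝ => z ^ (1 + γ))
    (fun z => (1 + γ) * z ^ γ) (lt_add_one a)
    (Real.continuous_rpow_const (by linarith)).continuousOn
    (fun z hz => by
      simpa using Real.hasDerivAt_rpow_const (p := 1 + γ) (Or.inl (ha.trans_lt hz.1).ne'))
  rw [add_sub_cancel_left, div_one] at hslope
  rw [← hslope]
  gcongr
  · exact ha.trans hc.1.le
  · exact hc.2.le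

theorem gronwallBound_le_mul_exp {δ K ε x : ℝ} (hK : 0 < K) (hε : 0 ≤ ε) :
    gronwallBound δ K ε x ≤ (δ + ε / K) * Real.exp (K * x) := by
  rw [gronwallBound_of_K_ne_0 hK.ne']
  have hsplit : (δ + ε / K) * Real.exp (K * x)
      = δ * Real.exp (K * x) + ε / K * (Real.exp (K * x) - 1) + ε / K := by ring
  linarith [div_nonneg hε hK.le]

theorem hasDerivWithinAt_Ici_of_eq_add_integral {F g : ℝ → ℝ} {a t : ℝ}
    (hg : ContinuousOn g (Ici a)) (hF : ∀ s ∈ Ici a, F s = F a + ∫ u in a..s, g u)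
    (ht : a ≤ t) : HasDerivWithinAt F (g t) (Ici t) t := by
  have hint : IntervalIntegrable g volume a t :=
    (hg.mono (by rw [uIcc_of_le ht]; exact Icc_subset_Ici_self)).intervalIntegrable
  have hFTC : HasDerivWithinAt (fun s => ∫ u in a..s, g u) (g t) (Ici t) t :=
    intervalIntegral.integral_hasDerivWithinAt_right hint
      ((hg.mono (Ioi_subset_Ici ht)).stronglyMeasurableAtFilter_nhdsWithin measurableSet_Ioi t)
      ((hg t ht).mono (Ioi_subset_Ici ht))
  exact (hFTC.const_add (F a)).congr (fun s hs => hF s (ht.trans hs)) (hF t ht)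

namespace Silicosis

/-- `Mᵢ` is the coordinate `y_{i+2}`, whose weight in the norm of `X^{1+γ}` is `(i+1)^{1+γ}`. -/
def momentWeight (γ : ℝ) (i : ℕ) : ℝ := ((i : ℝ) + 1) ^ ((1 : ℝ) + γ)

theorem momentWeight_nonneg (γ : ℝ) (i : ℕ) : 0 ≤ momentWeight γ i := by
  unfold momentWeight; positivity

theorem momentWeight_zero (γ : ℝ) : momentWeight γ 0 = 1 := by
  simp [momentWeight]

theorem momentWeight_le_succ {γ : ℝ} (hγ : 0 ≤ γ) (i : ℕ) :
    momentWeight γ i ≤ momentWeight γ (i + 1) := by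
  unfold momentWeight
  gcongr
  exact i.le_succ

theorem momentWeight_succ_sub_mul_le {γ : ℝ} (hγ0 : 0 ≤ γ) (hγ1 : γ ≤ 1) (j : ℕ) :
    (momentWeight γ (j + 1) - momentWeight γ j) * ((j : ℝ) + 1) ^ γ
      ≤ 4 * momentWeight γ j := by
  set a : ℝ := (j : ℝ) + 1
  have ha : 1 ≤ a := by simp [a]
  have hdiff : momentWeight γ (j + 1) - momentWeight γ j ≤ 4 * a ^ γ :=
    calc momentWeight γ (j + 1) - momentWeight γ j ≤ (1 + γ) * (a + 1) ^ γ := by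
          simpa [momentWeight, a] using Real.add_one_rpow_sub_rpow_le (by linarith) hγ0
      _ ≤ 2 * (2 * a) ^ γ := by gcongr <;> linarith
      _ = 2 * (2 ^ γ * a ^ γ) := by rw [Real.mul_rpow (by norm_num) (by linarith)]
      _ ≤ 2 * (2 * a ^ γ) := by gcongr; exact Real.rpow_le_self_of_one_le one_le_two hγ1
      _ = 4 * a ^ γ := by ring
  calc (momentWeight γ (j + 1) - momentWeight γ j) * a ^ γ ≤ 4 * a ^ γ * a ^ γ := by gcongr
    _ = 4 * a ^ (γ + γ) := by rw [Real.rpow_add (by linarith)]; ring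
    _ ≤ 4 * a ^ ((1 : ℝ) + γ) := by gcongr
    _ = 4 * momentWeight γ j := rfl

def inflow (k : ℕ → ℝ) (r : ℝ) (x : ℝ → ℝ) (M : ℕ → ℝ → ℝ) : ℕ → ℝ → ℝ
  | 0, _ => r
  | j + 1, s => k j * x s * M j s

def rate (k p q : ℕ → ℝ) (r : ℝ) (x : ℝ → ℝ) (M : ℕ → ℝ → ℝ) (i : ℕ) (s : ℝ) : ℝ :=
  inflow k r x M i s - k i * x s * M i s - (p i + q i) * M i s

variable {k p q w : ℕ → ℝ} {r : ℝ} {x : ℝ → ℝ} {M : ℕ → ℝ → ℝ} {s : ℝ}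

theorem sum_range_mul_inflow_le (hk : ∀ i, 0 ≤ k i) (hr : 0 ≤ r) (hx : 0 ≤ x s)
    (hM : ∀ i, 0 ≤ M i s) (hw : ∀ i, 0 ≤ w i) (N : ℕ) :
    ∑ i ∈ Finset.range N, w i * inflow k r x M i s
      ≤ w 0 * r + ∑ j ∈ Finset.range N, w (j + 1) * (k j * x s * M j s) := by
  have hnonneg : ∀ i, 0 ≤ w i * inflow k r x M i s := by
    rintro (_ | j)
    · exact mul_nonneg (hw 0) hr
    · exact mul_nonneg (hw _) (mul_nonneg (mul_nonneg (hk j) hx) (hM j))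
  calc ∑ i ∈ Finset.range N, w i * inflow k r x M i s
      ≤ ∑ i ∈ Finset.range (N + 1), w i * inflow k r x M i s :=
        Finset.sum_le_sum_of_subset_of_nonneg (Finset.range_subset_range.2 N.le_succ)
          fun i _ _ => hnonneg i
    _ = w 0 * r + ∑ j ∈ Finset.range N, w (j + 1) * (k j * x s * M j s) := by
        rw [Finset.sum_range_succ', add_comm]; rfl

theorem sum_range_mul_rate_le (hk : ∀ i, 0 ≤ k i) (hp : ∀ i, 0 ≤ p i) (hq : ∀ i, 0 ≤ q i)
    (hr : 0 ≤ r) (hx : 0 ≤ x s) (hM : ∀ i, 0 ≤ M i s) (hw : ∀ i, 0 ≤ w i) (N : ℕ) :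
    ∑ i ∈ Finset.range N, w i * rate k p q r x M i s
      ≤ w 0 * r + ∑ j ∈ Finset.range N, (w (j + 1) - w j) * (k j * x s * M j s) := by
  have hloss : ∀ i, w i * rate k p q r x M i s
      ≤ w i * inflow k r x M i s - w i * (k i * x s * M i s) := fun i => by
    have hsplit : w i * rate k p q r x M i s = w i * inflow k r x M i s
        - w i * (k i * x s * M i s) - w i * ((p i + q i) * M i s) := by
      unfold rate; ring
    linarith [mul_nonneg (hw i) (mul_nonneg (add_nonneg (hp i) (hq i)) (hM i))]
  calc ∑ i ∈ Finset.range N, w i * rate k p q r x M i s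
      ≤ ∑ i ∈ Finset.range N, (w i * inflow k r x M i s - w i * (k i * x s * M i s)) :=
        Finset.sum_le_sum fun i _ => hloss i
    _ ≤ w 0 * r + ∑ j ∈ Finset.range N, w (j + 1) * (k j * x s * M j s)
          - ∑ i ∈ Finset.range N, w i * (k i * x s * M i s) := by
        rw [Finset.sum_sub_distrib]
        linarith [sum_range_mul_inflow_le hk hr hx hM hw N]
    _ = w 0 * r + ∑ j ∈ Finset.range N, (w (j + 1) - w j) * (k j * x s * M j s) := by
        simp only [sub_mul, Finset.sum_sub_distrib]; ring

theorem sum_range_momentWeight_mul_rate_le {γ Ck X : ℝ} (hγ0 : 0 ≤ γ) (hγ1 : γ ≤ 1)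
    (hk : ∀ i, 0 ≤ k i) (hkO : ∀ i : ℕ, k i ≤ Ck * ((i : ℝ) + 1) ^ γ)
    (hp : ∀ i, 0 ≤ p i) (hq : ∀ i, 0 ≤ q i) (hr : 0 ≤ r)
    (hx : 0 ≤ x s) (hxX : x s ≤ X) (hM : ∀ i, 0 ≤ M i s) (N : ℕ) :
    ∑ i ∈ Finset.range N, momentWeight γ i * rate k p q r x M i s
      ≤ 4 * Ck * X * ∑ i ∈ Finset.range N, momentWeight γ i * M i s + r := by
  have hCk : 0 ≤ Ck := by simpa using (hk 0).trans (hkO 0)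
  set w := momentWeight γ
  have hterm (j : ℕ) : (w (j + 1) - w j) * (k j * x s * M j s) ≤ 4 * Ck * X * (w j * M j s) := by
    have hinc := sub_nonneg.2 (momentWeight_le_succ hγ0 j)
    have hkx : k j * x s ≤ Ck * ((j : ℝ) + 1) ^ γ * X :=
      mul_le_mul (hkO j) hxX hx ((hk j).trans (hkO j))
    have hCkXM : 0 ≤ Ck * X * M j s := mul_nonneg (mul_nonneg hCk (hx.trans hxX)) (hM j)
    calc (w (j + 1) - w j) * (k j * x s * M j s)
        ≤ (w (j + 1) - w j) * (Ck * ((j : ℝ) + 1) ^ γ * X * M j s) :=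
          mul_le_mul_of_nonneg_left (mul_le_mul_of_nonneg_right hkx (hM j)) hinc
      _ = Ck * X * M j s * ((w (j + 1) - w j) * ((j : ℝ) + 1) ^ γ) := by ring
      _ ≤ Ck * X * M j s * (4 * w j) :=
          mul_le_mul_of_nonneg_left (momentWeight_succ_sub_mul_le hγ0 hγ1 j) hCkXM
      _ = 4 * Ck * X * (w j * M j s) := by ring
  calc ∑ i ∈ Finset.range N, w i * rate k p q r x M i s
      ≤ w 0 * r + ∑ j ∈ Finset.range N, (w (j + 1) - w j) * (k j * x s * M j s) :=
        sum_range_mul_rate_le hk hp hq hr hx hM (momentWeight_nonneg γ) N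
    _ ≤ r + ∑ j ∈ Finset.range N, 4 * Ck * X * (w j * M j s) := by
        rw [show w 0 = 1 from momentWeight_zero γ, one_mul]
        exact add_le_add_right (Finset.sum_le_sum fun j _ => hterm j) r
    _ = 4 * Ck * X * ∑ i ∈ Finset.range N, w i * M i s + r := by
        rw [Finset.mul_sum]; ring

end Silicosis

open Silicosis

namespace IsSol

variable {k p q : ℕ → ℝ} {r α : ℝ} {D : Set ℝ} {x : ℝ → ℝ} {M : ℕ → ℝ → ℝ}

theorem continuousOn_rate (h : IsSol k p q r α D x M) (i : ℕ) :
    ContinuousOn (rate k p q r x M i) D := by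
  have hin : ContinuousOn (inflow k r x M i) D := by
    cases i with
    | zero => exact continuousOn_const
    | succ j => exact (continuousOn_const.mul h.x_cont).mul (h.M_cont j)
  exact (hin.sub ((continuousOn_const.mul h.x_cont).mul (h.M_cont i))).sub
    (continuousOn_const.mul (h.M_cont i))

theorem exists_bound_x (h : IsSol k p q r α D x M) {T : ℝ} (hT : Icc 0 T ⊆ D) :
    ∃ X, ∀ t ∈ Icc 0 T, x t ≤ X := by
  obtain ⟨C, hC⟩ := h.norm_bdd T hT
  refine ⟨C, fun t ht => ?_⟩
  have : 0 ≤ ∑' i : ℕ, ((i : ℝ) + 1) * M i t :=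
    tsum_nonneg fun i => mul_nonneg (by positivity) (h.M_nonneg i t (hT ht))
  linarith [hC t ht]

theorem eq_add_integral_rate (h : IsSol k p q r α (Ici 0) x M) (i : ℕ) {t : ℝ} (ht : 0 ≤ t) :
    M i t = M i 0 + ∫ s in (0 : ℝ)..t, rate k p q r x M i s := by
  cases i with
  | zero =>
    have hloss :
        IntervalIntegrable (fun s => k 0 * x s * M 0 s + (p 0 + q 0) * M 0 s) volume 0 t :=
      (((continuousOn_const.mul h.x_cont).mul (h.M_cont 0)).add
        (continuousOn_const.mul (h.M_cont 0))).mono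
        (by rw [uIcc_of_le ht]; exact Icc_subset_Ici_self) |>.intervalIntegrable
    have hrate : ∀ s, rate k p q r x M 0 s = r - (k 0 * x s * M 0 s + (p 0 + q 0) * M 0 s) :=
      fun s => by unfold rate inflow; ring
    simp only [hrate]
    rw [intervalIntegral.integral_sub intervalIntegrable_const hloss,
      intervalIntegral.integral_const, h.eq_M0 t ht]
    simp only [sub_zero, smul_eq_mul]
    ring
  | succ j => simpa [rate, inflow] using h.eq_M (j + 1) le_add_self t ht

theorem hasDerivWithinAt_rate (h : IsSol k p q r α (Ici 0) x M) (i : ℕ) {t : ℝ}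
    (ht : 0 ≤ t) :
    HasDerivWithinAt (M i) (rate k p q r x M i t) (Ici t) t :=
  hasDerivWithinAt_Ici_of_eq_add_integral (h.continuousOn_rate i)
    (fun _ hs => h.eq_add_integral_rate i hs) ht

theorem sum_range_momentWeight_mul_le (h : IsSol k p q r α (Ici 0) x M) {γ Ck X K T : ℝ}
    (hγ0 : 0 ≤ γ) (hγ1 : γ ≤ 1) (hk : ∀ i, 0 ≤ k i)
    (hkO : ∀ i : ℕ, k i ≤ Ck * ((i : ℝ) + 1) ^ γ) (hp : ∀ i, 0 ≤ p i) (hq : ∀ i, 0 ≤ q i)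
    (hr : 0 ≤ r) (hX : ∀ t ∈ Icc 0 T, x t ≤ X)
    (hK : 0 < K) (hKX : 4 * Ck * X ≤ K) (h0 : Summable fun i => momentWeight γ i * M i 0)
    (N : ℕ) {t : ℝ} (ht : t ∈ Icc 0 T) :
    ∑ i ∈ Finset.range N, momentWeight γ i * M i t
      ≤ (∑' i, momentWeight γ i * M i 0 + r / K) * Real.exp (K * t) := by
  set S : ℝ → ℝ := fun t => ∑ i ∈ Finset.range N, momentWeight γ i * M i t
  have hS_nonneg : ∀ t, 0 ≤ t → 0 ≤ S t := fun t ht =>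
    Finset.sum_nonneg fun i _ => mul_nonneg (momentWeight_nonneg γ i) (h.M_nonneg i t ht)
  have hcont : ContinuousOn S (Icc 0 T) :=
    continuousOn_finsetSum _ fun i _ =>
      continuousOn_const.mul ((h.M_cont i).mono Icc_subset_Ici_self)
  have hderiv : ∀ t ∈ Ico 0 T, HasDerivWithinAt S
      (∑ i ∈ Finset.range N, momentWeight γ i * rate k p q r x M i t) (Ici t) t :=
    fun t ht => HasDerivWithinAt.fun_sum fun i _ => (h.hasDerivWithinAt_rate i ht.1).const_mul _
  have hbound : ∀ t ∈ Ico 0 T,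
      ∑ i ∈ Finset.range N, momentWeight γ i * rate k p q r x M i t ≤ K * S t + r := fun t ht =>
    (sum_range_momentWeight_mul_rate_le hγ0 hγ1 hk hkO hp hq hr (h.x_nonneg t ht.1)
      (hX t (Ico_subset_Icc_self ht)) (fun i => h.M_nonneg i t ht.1) N).trans
      (by gcongr; exact hS_nonneg t ht.1)
  have hinit : S 0 ≤ ∑' i, momentWeight γ i * M i 0 :=
    h0.sum_le_tsum _ fun i _ => mul_nonneg (momentWeight_nonneg γ i) (h.M_nonneg i 0 self_mem_Ici)
  calc S t ≤ gronwallBound (∑' i, momentWeight γ i * M i 0) K r (t - 0) :=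
        le_gronwallBound_of_liminf_deriv_right_le hcont
          (fun t ht _ hr' => (hderiv t ht).liminf_right_slope_le hr') hinit hbound t ht
    _ ≤ (∑' i, momentWeight γ i * M i 0 + r / K) * Real.exp (K * t) := by
        rw [sub_zero]; exact gronwallBound_le_mul_exp hK hr

theorem summable_momentWeight_and_le_exp (h : IsSol k p q r α (Ici 0) x M) {γ Ck : ℝ}
    (hγ0 : 0 ≤ γ) (hγ1 : γ ≤ 1) (hk : ∀ i, 0 ≤ k i)
    (hkO : ∀ i : ℕ, k i ≤ Ck * ((i : ℝ) + 1) ^ γ) (hp : ∀ i, 0 ≤ p i) (hq : ∀ i, 0 ≤ q i)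
    (hr : 0 ≤ r)
    (h0 : Summable fun i => momentWeight γ i * M i 0) (T : ℝ) :
    ∃ C1 C2 : ℝ, ∀ t ∈ Icc 0 T, Summable (fun i => momentWeight γ i * M i t) ∧
      x t + ∑' i, momentWeight γ i * M i t ≤ C1 * Real.exp (C2 * t) := by
  obtain ⟨X, hX⟩ := h.exists_bound_x (T := T) Icc_subset_Ici_self
  set K := max (4 * Ck * X) 1
  set A := ∑' i, momentWeight γ i * M i 0 + r / K
  have hK : 0 < K := one_pos.trans_le (le_max_right _ _)
  refine ⟨X + A, K, fun t ht => ?_⟩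
  have hnonneg : ∀ i, 0 ≤ momentWeight γ i * M i t := fun i =>
    mul_nonneg (momentWeight_nonneg γ i) (h.M_nonneg i t ht.1)
  have hpartial : ∀ N, ∑ i ∈ Finset.range N, momentWeight γ i * M i t ≤ A * Real.exp (K * t) :=
    fun N => h.sum_range_momentWeight_mul_le hγ0 hγ1 hk hkO hp hq hr hX hK (le_max_left _ _) h0 N ht
  refine ⟨summable_of_sum_range_le hnonneg hpartial, ?_⟩
  have hX0 : 0 ≤ X := (h.x_nonneg t ht.1).trans (hX t ht)
  have hexp : 1 ≤ Real.exp (K * t) := Real.one_le_exp (mul_nonneg hK.le ht.1)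
  calc x t + ∑' i, momentWeight γ i * M i t ≤ X + A * Real.exp (K * t) :=
        add_le_add (hX t ht) (Real.tsum_le_of_sum_range_le hnonneg hpartial)
    _ ≤ (X + A) * Real.exp (K * t) := by nlinarith

end IsSol

theorem silicosis_weighted_cone_invariance_general
    (k p q : ℕ → ℝ)
    (hk : ∀ i, 0 ≤ k i) (hp : ∀ i, 0 ≤ p i) (hq : ∀ i, 0 ≤ q i)
    (r α : ℝ) (hr : 0 ≤ r)
    (γ : ℝ) (hγ0 : 0 ≤ γ) (hγ1 : γ ≤ 1)
    (Ck : ℝ) (hkO : ∀ i : ℕ, k i ≤ Ck * ((i : ℝ) + 1) ^ γ)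
    (x : ℝ → ℝ) (M : ℕ → ℝ → ℝ)
    (hsol : IsSol k p q r α (Set.Ici 0) x M)
    -- `y₀ ∈ X₊^{1+γ}`: the solution is nonnegative by definition; the initial datum
    -- has finite weighted norm
    (hmom0 : Summable (fun i : ℕ => ((i : ℝ) + 1) ^ ((1:ℝ) + γ) * M i 0)) :
    -- the solution stays in `X₊^{1+γ}` ...
    (∀ t : ℝ, 0 ≤ t → Summable (fun i : ℕ => ((i : ℝ) + 1) ^ ((1:ℝ) + γ) * M i t)) ∧
    -- ... with an exponential bound for the weighted norm on compacts
    (∀ T : ℝ, 0 < T → ∃ C1 C2 : ℝ, ∀ t ∈ Icc (0:ℝ) T,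
      x t + ∑' i : ℕ, ((i : ℝ) + 1) ^ ((1:ℝ) + γ) * M i t ≤ C1 * Real.exp (C2 * t)) := by
  have hbound := hsol.summable_momentWeight_and_le_exp hγ0 hγ1 hk hkO hp hq hr hmom0
  refine ⟨fun t ht => ?_, fun T _ => ?_⟩
  · obtain ⟨_, _, hb⟩ := hbound t
    exact (hb t ⟨ht, le_rfl⟩).1
  · obtain ⟨C1, C2, hb⟩ := hbound T
    exact ⟨C1, C2, fun t ht => (hb t ht).2⟩

/-- Proposition 8.1, invariance of `X₊^{1+γ}`: if `pᵢ = O(1)`,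
`qᵢ = O(i)`, `kᵢ = O(i^γ)` with `γ ∈ [0,1]`, and the initial datum lies in the
weighted positive cone `X₊^{1+γ}`, then the (unique) solution stays in `X₊^{1+γ}` for
all `t > 0`, with the weighted norm bounded by `C₁ e^{C₂ t}` on compacts, the
constants depending only on `T`, the coefficients, and the initial data. -/
theorem silicosis_weighted_cone_invariance
    (k p q : ℕ → ℝ)
    (hk : ∀ i, 0 ≤ k i) (hp : ∀ i, 0 ≤ p i) (hq : ∀ i, 0 ≤ q i)
    (r α : ℝ) (hr : 0 ≤ r) (hα : 0 ≤ α)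
    (γ : ℝ) (hγ0 : 0 ≤ γ) (hγ1 : γ ≤ 1)
    (Cp : ℝ) (hpB : ∀ i : ℕ, p i ≤ Cp)
    (Cq : ℝ) (hqO : ∀ i : ℕ, q i ≤ Cq * ((i : ℝ) + 1))
    (Ck : ℝ) (hkO : ∀ i : ℕ, k i ≤ Ck * ((i : ℝ) + 1) ^ γ)
    (x : ℝ → ℝ) (M : ℕ → ℝ → ℝ)
    (hsol : IsSol k p q r α (Set.Ici 0) x M)
    -- `y₀ ∈ X₊^{1+γ}`: the solution is nonnegative by definition; the initial datum
    -- has finite weighted norm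
    (hmom0 : Summable (fun i : ℕ => ((i : ℝ) + 1) ^ ((1:ℝ) + γ) * M i 0)) :
    -- the solution stays in `X₊^{1+γ}` ...
    (∀ t : ℝ, 0 ≤ t → Summable (fun i : ℕ => ((i : ℝ) + 1) ^ ((1:ℝ) + γ) * M i t)) ∧
    -- ... with an exponential bound for the weighted norm on compacts
    (∀ T : ℝ, 0 < T → ∃ C1 C2 : ℝ, ∀ t ∈ Icc (0:ℝ) T,
      x t + ∑' i : ℕ, ((i : ℝ) + 1) ^ ((1:ℝ) + γ) * M i t ≤ C1 * Real.exp (C2 * t)) :=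
  silicosis_weighted_cone_invariance_general k p q hk hp hq r α hr γ hγ0 hγ1 Ck hkO x M hsol hmom0
end
end

section
/- Let (p_i), (q_i), (k_i) be nonnegative with k_i = O(i), and suppose for sufficiently large i, q_i = a i^η for some constants a, η > 0. Then every solution y of the silicosis system on [0,T) has components x and M_i of class C¹ on (0,T) and satisfies the equations in the classical differential sense on (0,T). -/
/-!
The equations for `Mᵢ` have continuous right-hand sides, so the fundamental theorem of calculus
applies directly; for `x` one needs continuity of `t ↦ ∑ kᵢ Mᵢ(t)` and `t ↦ ∑ i qᵢ Mᵢ(t)`.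
The weight `wᵢ = i qᵢ` is eventually `a i^(η+1)`: increasing, unbounded, dominating `kᵢ = O(i)`,
and with `(wᵢ₊₁ - wᵢ) kᵢ = O(wᵢ)`. Both series are then controlled by the tails
`∑_{i ≥ m} wᵢ Mᵢ(t)`, and it suffices that these are small uniformly near each `t₀`.
Take a short window `[t₀ - h, t₀ + h]` and a cutoff `n` with small weighted tail at `t₀ - h`.
Summation by parts with the weight `wᵢ - wₙ`, which vanishes at `i = n` so that the inflow
from `Mₙ₋₁` drops out, shows that `∑_{i ≥ n} (wᵢ - wₙ) Mᵢ` grows on the window by at most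
`B · sup x · ∫ moment`, which is small for small `h`. Finally `wᵢ ≤ 2 (wᵢ - wₙ)` once
`wᵢ ≥ 2 wₙ`.
-/

open MeasureTheory Set Filter

noncomputable section

open Topology Asymptotics

theorem continuousOn_tsum_of_forall_sum_Ico_le {f : ℕ → ℝ → ℝ} {s : Set ℝ}
    (hf : ∀ i, ContinuousOn (f i) s) (hf0 : ∀ i, ∀ t ∈ s, 0 ≤ f i t)
    (hsum : ∀ t ∈ s, Summable fun i => f i t)
    (htail : ∀ t₀ ∈ s, ∀ ε > 0, ∃ m, ∀ᶠ t in 𝓝[s] t₀, ∀ n, ∑ i ∈ Finset.Ico m n, f i t ≤ ε) :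
    ContinuousOn (fun t => ∑' i, f i t) s := by
  refine TendstoLocallyUniformlyOn.continuousOn
    (F := fun n t => ∑ i ∈ Finset.range n, f i t) (p := atTop) ?_
    (Frequently.of_forall fun n => continuousOn_finsetSum _ fun i _ => hf i)
  rw [Metric.tendstoLocallyUniformlyOn_iff]
  intro ε hε t₀ ht₀
  obtain ⟨m, hm⟩ := htail t₀ ht₀ (ε / 2) (half_pos hε)
  refine ⟨_, inter_mem hm self_mem_nhdsWithin, (eventually_ge_atTop m).mono fun n hn t ht => ?_⟩
  have hnonneg : ∀ i, 0 ≤ f i t := fun i => hf0 i t ht.2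
  have htail_le : ∑' i, f (i + n) t ≤ ε / 2 := by
    refine Real.tsum_le_of_sum_range_le (fun i => hnonneg _) fun j => ?_
    calc ∑ i ∈ Finset.range j, f (i + n) t = ∑ i ∈ Finset.Ico n (n + j), f i t := by
          simp [Finset.sum_Ico_eq_sum_range, add_comm]
      _ ≤ ∑ i ∈ Finset.Ico m (n + j), f i t :=
          Finset.sum_le_sum_of_subset_of_nonneg (Finset.Ico_subset_Ico_left hn)
            fun i _ _ => hnonneg i
      _ ≤ ε / 2 := ht.1 _
  rw [← (hsum t ht.2).sum_add_tsum_nat_add n, Real.dist_eq, add_sub_cancel_left,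
    abs_of_nonneg (tsum_nonneg fun i => hnonneg _)]
  linarith

theorem Summable.eventually_forall_sum_Ico_le {f : ℕ → ℝ} (hf : Summable f) (hf0 : ∀ i, 0 ≤ f i)
    {ε : ℝ} (hε : 0 < ε) : ∀ᶠ n in atTop, ∀ m, ∑ i ∈ Finset.Ico n m, f i ≤ ε := by
  filter_upwards [(tendsto_order.1 (tendsto_sum_nat_add f)).2 ε hε] with n hn m
  calc ∑ i ∈ Finset.Ico n m, f i = ∑ i ∈ Finset.range (m - n), f (i + n) := by
        simp [Finset.sum_Ico_eq_sum_range, add_comm]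
    _ ≤ ∑' i, f (i + n) := ((summable_nat_add_iff n).2 hf).sum_le_tsum _ fun i _ => hf0 _
    _ ≤ ε := hn.le

theorem tendsto_integral_sub_add {g : ℝ → ℝ} {a b t₀ : ℝ} (hg : IntervalIntegrable g volume a b)
    (ht₀ : t₀ ∈ Ioo a b) : Tendsto (fun h => ∫ u in t₀ - h..t₀ + h, g u) (𝓝 0) (𝓝 0) := by
  set F := fun s => ∫ u in a..s, g u
  have hab : a ≤ b := (ht₀.1.trans ht₀.2).le
  have hF : ContinuousAt F t₀ :=
    (intervalIntegral.continuousOn_primitive_interval' hg left_mem_uIcc).continuousAt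
      (by rw [uIcc_of_le hab]; exact Icc_mem_nhds ht₀.1 ht₀.2)
  have hplus : Tendsto (fun h : ℝ => t₀ + h) (𝓝 0) (𝓝 t₀) := by
    simpa using tendsto_const_nhds.add (tendsto_id (x := 𝓝 (0 : ℝ)))
  have hminus : Tendsto (fun h : ℝ => t₀ - h) (𝓝 0) (𝓝 t₀) := by
    simpa using tendsto_const_nhds.sub (tendsto_id (x := 𝓝 (0 : ℝ)))
  have hint : ∀ s ∈ Ioo a b, IntervalIntegrable g volume a s := fun s hs =>
    hg.mono_set (by rw [uIcc_of_le hab, uIcc_of_le hs.1.le]; exact Icc_subset_Icc_right hs.2.le)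
  have key := (hF.tendsto.comp hplus).sub (hF.tendsto.comp hminus)
  rw [sub_self] at key
  refine key.congr' ?_
  filter_upwards [hplus.eventually (Ioo_mem_nhds ht₀.1 ht₀.2),
    hminus.eventually (Ioo_mem_nhds ht₀.1 ht₀.2)] with h hup hlow
  exact intervalIntegral.integral_interval_sub_left (hint _ hup) (hint _ hlow)

theorem hasDerivAt_of_eqOn_add_integral {f g : ℝ → ℝ} {U : Set ℝ} {a b c t : ℝ} (hU : IsOpen U)
    (hf : ∀ s ∈ U, f s = c + b * s + ∫ u in a..s, g u) (hg_int : IntervalIntegrable g volume a t)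
    (hg : ContinuousOn g U) (ht : t ∈ U) : HasDerivAt f (b + g t) t := by
  have hI := intervalIntegral.integral_hasDerivAt_right hg_int
    (hg.stronglyMeasurableAtFilter hU t ht) (hg.continuousAt (hU.mem_nhds ht))
  have hlin : HasDerivAt (fun s => c + b * s) b t := by
    simpa using ((hasDerivAt_id t).const_mul b).const_add c
  exact (hlin.add hI).congr_of_eventuallyEq (eventually_of_mem (hU.mem_nhds ht) hf)

theorem sum_Ico_mul_sub_sub_le {w A C : ℕ → ℝ} {n m : ℕ} (hw : ∀ i ≥ n, w i ≤ w (i + 1))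
    (hwn : 0 ≤ w n) (hA : ∀ i, 0 ≤ A i) (hC : ∀ i, 0 ≤ C i) :
    ∑ i ∈ Finset.Ico n m, w i * (A (i - 1) - A i - C i) ≤
      w n * A (n - 1) + ∑ i ∈ Finset.Ico n m, (w (i + 1) - w i) * A i := by
  have hw0 : ∀ i ≥ n, 0 ≤ w i := fun i hi =>
    hwn.trans (Nat.rel_of_forall_rel_succ_of_le_of_le (· ≤ ·) hw le_rfl hi)
  rcases lt_or_ge m n with hmn | hnm
  · simpa [Finset.Ico_eq_empty_of_le hmn.le] using mul_nonneg hwn (hA _)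
  have hparts : ∑ i ∈ Finset.Ico n m, w i * (A (i - 1) - A i) + w m * A (m - 1) =
      w n * A (n - 1) + ∑ i ∈ Finset.Ico n m, (w (i + 1) - w i) * A i := by
    induction m, hnm using Nat.le_induction with
    | base => simp
    | succ m hm ih =>
      rw [Finset.sum_Ico_succ_top hm, Finset.sum_Ico_succ_top hm, Nat.add_sub_cancel]
      linarith
  have hdrop : ∑ i ∈ Finset.Ico n m, w i * (A (i - 1) - A i - C i) ≤
      ∑ i ∈ Finset.Ico n m, w i * (A (i - 1) - A i) :=
    Finset.sum_le_sum fun i hi => by nlinarith [mul_nonneg (hw0 i (Finset.mem_Ico.1 hi).1) (hC i)]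
  nlinarith [mul_nonneg (hw0 m hnm) (hA (m - 1))]

theorem sum_Ico_mul_le_two_mul_sum_Ico_sub_mul {w f : ℕ → ℝ} {n m : ℕ} (hf : ∀ i, 0 ≤ f i)
    (hmono : ∀ i ≥ n, w i ≤ w (i + 1)) (hnm : n ≤ m) (hm : ∀ i ≥ m, 2 * w n ≤ w i) (m' : ℕ) :
    ∑ i ∈ Finset.Ico m m', w i * f i ≤ 2 * ∑ i ∈ Finset.Ico n m', (w i - w n) * f i := by
  rw [Finset.mul_sum]
  calc ∑ i ∈ Finset.Ico m m', w i * f i ≤ ∑ i ∈ Finset.Ico m m', 2 * ((w i - w n) * f i) :=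
        Finset.sum_le_sum fun i hi => by nlinarith [hm i (Finset.mem_Ico.1 hi).1, hf i]
    _ ≤ ∑ i ∈ Finset.Ico n m', 2 * ((w i - w n) * f i) :=
        Finset.sum_le_sum_of_subset_of_nonneg (Finset.Ico_subset_Ico_left hnm) fun i hi _ =>
          mul_nonneg two_pos.le (mul_nonneg (sub_nonneg.2 (Nat.rel_of_forall_rel_succ_of_le_of_le
            (· ≤ ·) hmono le_rfl (Finset.mem_Ico.1 hi).1)) (hf i))

theorem rpow_add_one_sub_rpow_le {y s : ℝ} (hy : 0 ≤ y) (hs : 1 ≤ s) :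
    (y + 1) ^ s - y ^ s ≤ s * (y + 1) ^ (s - 1) := by
  obtain ⟨c, hc, hslope⟩ := exists_hasDerivAt_eq_slope (fun z : ℝ => z ^ s)
    (fun z => s * z ^ (s - 1)) (lt_add_one y)
    (fun z hz => (Real.continuousAt_rpow_const z s (Or.inr (by linarith))).continuousWithinAt)
    fun z _ => Real.hasDerivAt_rpow_const (Or.inr hs)
  rw [add_sub_cancel_left, div_one] at hslope
  rw [← hslope]
  gcongr
  · linarith [hc.1]
  · exact hc.2.le

theorem isBigO_rpow_add_one_sub_rpow_mul {s : ℝ} (hs : 1 ≤ s) :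
    (fun i : ℕ => (((i : ℝ) + 1) ^ s - (i : ℝ) ^ s) * ((i : ℝ) + 1)) =O[atTop]
      fun i : ℕ => (i : ℝ) ^ s := by
  refine IsBigO.of_bound (s * 2 ^ s) ((eventually_ge_atTop 1).mono fun i hi => ?_)
  have hi : (1 : ℝ) ≤ i := by exact_mod_cast hi
  have hdiff : 0 ≤ ((i : ℝ) + 1) ^ s - (i : ℝ) ^ s :=
    sub_nonneg.2 (Real.rpow_le_rpow (by linarith) (by linarith) (by linarith))
  rw [Real.norm_of_nonneg (mul_nonneg hdiff (by linarith)),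
    Real.norm_of_nonneg (Real.rpow_nonneg (by linarith) s)]
  calc (((i : ℝ) + 1) ^ s - (i : ℝ) ^ s) * ((i : ℝ) + 1)
      ≤ s * ((i : ℝ) + 1) ^ (s - 1) * ((i : ℝ) + 1) :=
        mul_le_mul_of_nonneg_right (rpow_add_one_sub_rpow_le (by linarith) hs) (by linarith)
    _ = s * ((i : ℝ) + 1) ^ s := by
        rw [mul_assoc, ← Real.rpow_add_one (by linarith), sub_add_cancel]
    _ ≤ s * (2 * (i : ℝ)) ^ s := by gcongr; linarith
    _ = s * 2 ^ s * (i : ℝ) ^ s := by rw [Real.mul_rpow (by norm_num) (by linarith)]; ring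

theorem isBigO_add_one_rpow {s : ℝ} (hs : 1 ≤ s) :
    (fun i : ℕ => (i : ℝ) + 1) =O[atTop] fun i : ℕ => (i : ℝ) ^ s := by
  refine IsBigO.of_bound 2 ((eventually_ge_atTop 1).mono fun i hi => ?_)
  have hi : (1 : ℝ) ≤ i := by exact_mod_cast hi
  rw [Real.norm_of_nonneg (by linarith), Real.norm_of_nonneg (Real.rpow_nonneg (by linarith) s)]
  linarith [Real.self_le_rpow_of_one_le hi hs]

theorem natCast_mul_eventuallyEq_rpow {q : ℕ → ℝ} {a η : ℝ} {N : ℕ}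
    (hq : ∀ i ≥ N, q i = a * (i : ℝ) ^ η) :
    (fun i : ℕ => (i : ℝ) * q i) =ᶠ[atTop] fun i => a * (i : ℝ) ^ (η + 1) := by
  filter_upwards [eventually_ge_atTop (max N 1)] with i hi
  rw [hq i (le_of_max_le_left hi), Real.rpow_add_one (Nat.cast_ne_zero.2 (by omega))]
  ring

theorem isBigO_rpow_of_eventuallyEq {w : ℕ → ℝ} {a s : ℝ} (ha : a ≠ 0)
    (hw : w =ᶠ[atTop] fun i => a * (i : ℝ) ^ s) : (fun i : ℕ => (i : ℝ) ^ s) =O[atTop] w :=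
  (isBigO_self_const_mul ha _ atTop).trans_eventuallyEq hw.symm

theorem eventually_le_succ_of_eventuallyEq_rpow {w : ℕ → ℝ} {a s : ℝ} (ha : 0 < a) (hs : 0 ≤ s)
    (hw : w =ᶠ[atTop] fun i => a * (i : ℝ) ^ s) : ∀ᶠ i in atTop, w i ≤ w (i + 1) := by
  filter_upwards [hw, (tendsto_add_atTop_nat 1).eventually hw] with i hi hi1
  rw [hi, hi1]
  gcongr
  simp

theorem tendsto_atTop_of_eventuallyEq_rpow {w : ℕ → ℝ} {a s : ℝ} (ha : 0 < a) (hs : 0 < s)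
    (hw : w =ᶠ[atTop] fun i => a * (i : ℝ) ^ s) : Tendsto w atTop atTop :=
  (((tendsto_rpow_atTop hs).comp tendsto_natCast_atTop_atTop).const_mul_atTop ha).congr' hw.symm

theorem isBigO_flux_of_eventuallyEq_rpow {w k : ℕ → ℝ} {a s : ℝ} (ha : a ≠ 0) (hs : 1 ≤ s)
    (hw : w =ᶠ[atTop] fun i => a * (i : ℝ) ^ s) (hk : k =O[atTop] fun i => (i : ℝ) + 1) :
    (fun i => (w (i + 1) - w i) * k i) =O[atTop] w := by
  have hdiff : (fun i : ℕ => a * (((i : ℝ) + 1) ^ s - (i : ℝ) ^ s)) =ᶠ[atTop]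
      fun i => w (i + 1) - w i := by
    filter_upwards [hw, (tendsto_add_atTop_nat 1).eventually hw] with i hi hi1
    rw [hi, hi1]
    push_cast
    ring
  exact ((((isBigO_const_mul_self a _ atTop).congr' hdiff EventuallyEq.rfl).mul hk).trans
    (isBigO_rpow_add_one_sub_rpow_mul hs)).trans (isBigO_rpow_of_eventuallyEq ha hw)

def momentCoeff (k p q : ℕ → ℝ) (i : ℕ) : ℝ := (i : ℝ) * p i + (i : ℝ) * q i + k i

def moment (k p q : ℕ → ℝ) (M : ℕ → ℝ → ℝ) (t : ℝ) : ℝ := ∑' i, momentCoeff k p q i * M i t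

theorem k_le_momentCoeff {k p q : ℕ → ℝ} (hp : ∀ i, 0 ≤ p i) (hq : ∀ i, 0 ≤ q i) (i : ℕ) :
    k i ≤ momentCoeff k p q i :=
  le_add_of_nonneg_left
    (add_nonneg (mul_nonneg i.cast_nonneg (hp i)) (mul_nonneg i.cast_nonneg (hq i)))

theorem mul_q_le_momentCoeff {k p q : ℕ → ℝ} (hk : ∀ i, 0 ≤ k i) (hp : ∀ i, 0 ≤ p i) (i : ℕ) :
    (i : ℝ) * q i ≤ momentCoeff k p q i := by
  have := mul_nonneg i.cast_nonneg (hp i)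
  have := hk i
  unfold momentCoeff
  linarith

/-- The right-hand side of the equation for `M i`, for `1 ≤ i` (`i - 1` truncates at `0`). -/
def rhsM (k p q : ℕ → ℝ) (x : ℝ → ℝ) (M : ℕ → ℝ → ℝ) (i : ℕ) (u : ℝ) : ℝ :=
  k (i - 1) * x u * M (i - 1) u - k i * x u * M i u - (p i + q i) * M i u

namespace IsSol

variable {k p q : ℕ → ℝ} {r α T : ℝ} {x : ℝ → ℝ} {M : ℕ → ℝ → ℝ}

theorem continuousOn_rhsM (hsol : IsSol k p q r α (Ico 0 T) x M) (i : ℕ) :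
    ContinuousOn (rhsM k p q x M i) (Ico 0 T) :=
  (((continuousOn_const.mul hsol.x_cont).mul (hsol.M_cont _)).sub
    ((continuousOn_const.mul hsol.x_cont).mul (hsol.M_cont i))).sub
    (continuousOn_const.mul (hsol.M_cont i))

theorem intervalIntegrable_rhsM (hsol : IsSol k p q r α (Ico 0 T) x M) (i : ℕ) {s t : ℝ}
    (hs : s ∈ Ico 0 T) (ht : t ∈ Ico 0 T) : IntervalIntegrable (rhsM k p q x M i) volume s t :=
  ((hsol.continuousOn_rhsM i).mono (ordConnected_Ico.uIcc_subset hs ht)).intervalIntegrable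

theorem M_eq_add_integral (hsol : IsSol k p q r α (Ico 0 T) x M) {i : ℕ} (hi : 1 ≤ i) {s t : ℝ}
    (hs : s ∈ Ico 0 T) (ht : t ∈ Ico 0 T) :
    M i t = M i s + ∫ u in s..t, rhsM k p q x M i u := by
  have h0 : (0 : ℝ) ∈ Ico 0 T := ⟨le_rfl, hs.1.trans_lt hs.2⟩
  rw [← intervalIntegral.integral_interval_sub_left (hsol.intervalIntegrable_rhsM i h0 ht)
    (hsol.intervalIntegrable_rhsM i h0 hs), hsol.eq_M i hi t ht, hsol.eq_M i hi s hs]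
  simp only [rhsM]
  ring

theorem sum_mul_M_eq (hsol : IsSol k p q r α (Ico 0 T) x M) (w : ℕ → ℝ) {n : ℕ} (hn : 1 ≤ n)
    (m : ℕ) {s t : ℝ} (hs : s ∈ Ico 0 T) (ht : t ∈ Ico 0 T) :
    ∑ i ∈ Finset.Ico n m, w i * M i t =
      ∑ i ∈ Finset.Ico n m, w i * M i s +
        ∫ u in s..t, ∑ i ∈ Finset.Ico n m, w i * rhsM k p q x M i u := by
  rw [intervalIntegral.integral_finsetSum fun i _ =>
    (hsol.intervalIntegrable_rhsM i hs ht).const_mul (w i), ← Finset.sum_add_distrib]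
  refine Finset.sum_congr rfl fun i hi => ?_
  rw [intervalIntegral.integral_const_mul,
    hsol.M_eq_add_integral (hn.trans (Finset.mem_Ico.1 hi).1) hs ht, mul_add]

theorem summable_mul_M (hsol : IsSol k p q r α (Ico 0 T) x M) {c : ℕ → ℝ} (hc0 : ∀ i, 0 ≤ c i)
    (hc : ∀ i, c i ≤ momentCoeff k p q i) {t : ℝ} (ht : t ∈ Ico 0 T) :
    Summable fun i => c i * M i t :=
  (hsol.summable_mom t ht).of_nonneg_of_le (fun i => mul_nonneg (hc0 i) (hsol.M_nonneg i t ht))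
    fun i => mul_le_mul_of_nonneg_right (hc i) (hsol.M_nonneg i t ht)

theorem tsum_mul_M_le_moment (hsol : IsSol k p q r α (Ico 0 T) x M) {c : ℕ → ℝ}
    (hc0 : ∀ i, 0 ≤ c i) (hc : ∀ i, c i ≤ momentCoeff k p q i) {t : ℝ}
    (ht : t ∈ Ico 0 T) : ∑' i, c i * M i t ≤ moment k p q M t :=
  (hsol.summable_mul_M hc0 hc ht).tsum_le_tsum
    (fun i => mul_le_mul_of_nonneg_right (hc i) (hsol.M_nonneg i t ht)) (hsol.summable_mom t ht)

theorem sum_mul_M_le_moment (hsol : IsSol k p q r α (Ico 0 T) x M) {c : ℕ → ℝ}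
    (hc0 : ∀ i, 0 ≤ c i) (hc : ∀ i, c i ≤ momentCoeff k p q i) {t : ℝ}
    (ht : t ∈ Ico 0 T) (s : Finset ℕ) : ∑ i ∈ s, c i * M i t ≤ moment k p q M t :=
  ((hsol.summable_mul_M hc0 hc ht).sum_le_tsum s
    fun i _ => mul_nonneg (hc0 i) (hsol.M_nonneg i t ht)).trans
      (hsol.tsum_mul_M_le_moment hc0 hc ht)

theorem exists_x_le (hsol : IsSol k p q r α (Ico 0 T) x M) {T' : ℝ} (hT' : T' < T) :
    ∃ C, ∀ t ∈ Icc 0 T', x t ≤ C := by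
  obtain ⟨C, hC⟩ := hsol.norm_bdd T' fun t ht => ⟨ht.1, ht.2.trans_lt hT'⟩
  refine ⟨C, fun t ht => (le_add_of_nonneg_right ?_).trans (hC t ht)⟩
  exact tsum_nonneg fun i =>
    mul_nonneg (by positivity) (hsol.M_nonneg i t ⟨ht.1, ht.2.trans_lt hT'⟩)

theorem intervalIntegrable_moment (hsol : IsSol k p q r α (Ico 0 T) x M) {s t : ℝ}
    (hs : s ∈ Ico 0 T) (ht : t ∈ Ico 0 T) : IntervalIntegrable (moment k p q M) volume s t :=
  (hsol.mom_int s hs).symm.trans (hsol.mom_int t ht)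

theorem moment_nonneg (hsol : IsSol k p q r α (Ico 0 T) x M) (hk : ∀ i, 0 ≤ k i)
    (hp : ∀ i, 0 ≤ p i) (hq : ∀ i, 0 ≤ q i) {t : ℝ} (ht : t ∈ Ico 0 T) : 0 ≤ moment k p q M t :=
  tsum_nonneg fun i => mul_nonneg ((hk i).trans (k_le_momentCoeff hp hq i)) (hsol.M_nonneg i t ht)

theorem sum_sub_mul_rhsM_le (hsol : IsSol k p q r α (Ico 0 T) x M) (hk : ∀ i, 0 ≤ k i)
    (hp : ∀ i, 0 ≤ p i) (hq : ∀ i, 0 ≤ q i) {w : ℕ → ℝ} (hw0 : ∀ i, 0 ≤ w i)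
    (hw : ∀ i, w i ≤ momentCoeff k p q i) {n : ℕ}
    (hmono : ∀ i ≥ n, w i ≤ w (i + 1)) {B : ℝ} (hB : 0 ≤ B)
    (hflux : ∀ i ≥ n, (w (i + 1) - w i) * k i ≤ B * w i) (m : ℕ) {C u : ℝ} (hu : u ∈ Ico 0 T)
    (hxu : x u ≤ C) :
    ∑ i ∈ Finset.Ico n m, (w i - w n) * rhsM k p q x M i u ≤ B * C * moment k p q M u := by
  have hM := fun i => hsol.M_nonneg i u hu
  have hx := hsol.x_nonneg u hu
  calc ∑ i ∈ Finset.Ico n m, (w i - w n) * rhsM k p q x M i u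
      ≤ (w n - w n) * (k (n - 1) * x u * M (n - 1) u) +
          ∑ i ∈ Finset.Ico n m, ((w (i + 1) - w n) - (w i - w n)) * (k i * x u * M i u) :=
        sum_Ico_mul_sub_sub_le (w := fun i => w i - w n) (A := fun i => k i * x u * M i u)
          (C := fun i => (p i + q i) * M i u) (fun i hi => by simpa using hmono i hi) (by simp)
          (fun i => by have := hk i; have := hM i; positivity)
          (fun i => by have := hp i; have := hq i; have := hM i; positivity)
    _ ≤ ∑ i ∈ Finset.Ico n m, B * C * (w i * M i u) := by
        rw [sub_self, zero_mul, zero_add]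
        refine Finset.sum_le_sum fun i hi => ?_
        have hi : n ≤ i := (Finset.mem_Ico.1 hi).1
        calc (w (i + 1) - w n - (w i - w n)) * (k i * x u * M i u)
            = ((w (i + 1) - w i) * k i) * (x u * M i u) := by ring
          _ ≤ (B * w i) * (C * M i u) :=
            mul_le_mul (hflux i hi) (mul_le_mul_of_nonneg_right hxu (hM i))
              (mul_nonneg hx (hM i)) (mul_nonneg hB (hw0 i))
          _ = B * C * (w i * M i u) := by ring
    _ ≤ B * C * moment k p q M u := by
        rw [← Finset.mul_sum]
        exact mul_le_mul_of_nonneg_left (hsol.sum_mul_M_le_moment hw0 hw hu _)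
          (mul_nonneg hB ((hx.trans hxu)))

theorem sum_sub_mul_M_le (hsol : IsSol k p q r α (Ico 0 T) x M) (hk : ∀ i, 0 ≤ k i)
    (hp : ∀ i, 0 ≤ p i) (hq : ∀ i, 0 ≤ q i) {w : ℕ → ℝ} (hw0 : ∀ i, 0 ≤ w i)
    (hw : ∀ i, w i ≤ momentCoeff k p q i) {n : ℕ} (hn : 1 ≤ n)
    (hmono : ∀ i ≥ n, w i ≤ w (i + 1)) {B : ℝ} (hB : 0 ≤ B)
    (hflux : ∀ i ≥ n, (w (i + 1) - w i) * k i ≤ B * w i) (m : ℕ) {C s t : ℝ}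
    (hs : s ∈ Ico 0 T) (ht : t ∈ Ico 0 T) (hst : s ≤ t) (hxC : ∀ u ∈ Icc s t, x u ≤ C) :
    ∑ i ∈ Finset.Ico n m, (w i - w n) * M i t ≤
      ∑ i ∈ Finset.Ico n m, (w i - w n) * M i s + B * C * ∫ u in s..t, moment k p q M u := by
  have hsub : uIcc s t ⊆ Ico 0 T := ordConnected_Ico.uIcc_subset hs ht
  have hint : IntervalIntegrable
      (fun u => ∑ i ∈ Finset.Ico n m, (w i - w n) * rhsM k p q x M i u) volume s t :=
    (continuousOn_finsetSum _ fun i _ =>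
      continuousOn_const.mul ((hsol.continuousOn_rhsM i).mono hsub)).intervalIntegrable
  rw [hsol.sum_mul_M_eq _ hn m hs ht, ← intervalIntegral.integral_const_mul]
  gcongr
  refine intervalIntegral.integral_mono_on hst hint
    ((hsol.intervalIntegrable_moment hs ht).const_mul _) fun u hu => ?_
  have hu' : u ∈ Ico 0 T := hsub (Icc_subset_uIcc hu)
  exact hsol.sum_sub_mul_rhsM_le hk hp hq hw0 hw hmono hB hflux m hu' (hxC u hu)

theorem exists_window (hsol : IsSol k p q r α (Ico 0 T) x M) (hk : ∀ i, 0 ≤ k i)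
    (hp : ∀ i, 0 ≤ p i) (hq : ∀ i, 0 ≤ q i) {t₀ : ℝ} (ht₀ : t₀ ∈ Ioo 0 T) {B ε : ℝ}
    (hB : 0 ≤ B) (hε : 0 < ε) :
    ∃ h > 0, ∃ C, Icc (t₀ - h) (t₀ + h) ⊆ Ico 0 T ∧ (∀ u ∈ Icc (t₀ - h) (t₀ + h), x u ≤ C) ∧
      ∀ t ∈ Icc (t₀ - h) (t₀ + h), B * C * ∫ u in t₀ - h..t, moment k p q M u ≤ ε := by
  obtain ⟨T', ht₀T', hT'T⟩ := exists_between ht₀.2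
  obtain ⟨C, hC⟩ := hsol.exists_x_le hT'T
  have hC0 : 0 ≤ C := (hsol.x_nonneg 0 ⟨le_rfl, ht₀.1.trans ht₀.2⟩).trans
    (hC 0 ⟨le_rfl, (ht₀.1.trans ht₀T').le⟩)
  have hmom := hsol.intervalIntegrable_moment (s := 0) (t := T')
    ⟨le_rfl, ht₀.1.trans ht₀.2⟩ ⟨(ht₀.1.trans ht₀T').le, hT'T⟩
  have hsmall := ((tendsto_integral_sub_add hmom ⟨ht₀.1, ht₀T'⟩).const_mul (B * C)).eventually
    (gt_mem_nhds (a := ε) (by simpa using hε))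
  obtain ⟨h, ⟨⟨hht₀, hhT'⟩, hhint⟩, hh0 : 0 < h⟩ := (((eventually_lt_nhds ht₀.1).and
      (eventually_lt_nhds (sub_pos.2 ht₀T'))).and hsmall
    |>.filter_mono nhdsWithin_le_nhds |>.and self_mem_nhdsWithin).exists (f := 𝓝[>] (0 : ℝ))
  have hwin : Icc (t₀ - h) (t₀ + h) ⊆ Icc 0 T' := Icc_subset_Icc (by linarith) (by linarith)
  have hwinT : Icc 0 T' ⊆ Ico 0 T := fun u hu => ⟨hu.1, hu.2.trans_lt hT'T⟩
  refine ⟨h, hh0, C, hwinT.trans' hwin, fun u hu => hC u (hwin hu), fun t ht => ?_⟩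
  refine le_trans (mul_le_mul_of_nonneg_left ?_ (mul_nonneg hB hC0)) hhint.le
  refine intervalIntegral.integral_mono_interval le_rfl ht.1 ht.2
    (ae_restrict_of_forall_mem measurableSet_Ioc fun u hu =>
      hsol.moment_nonneg hk hp hq (hwinT (hwin (Ioc_subset_Icc_self hu)))) (hmom.mono_set ?_)
  rw [uIcc_of_le (by linarith), uIcc_of_le (by linarith)]
  exact hwin

theorem eventually_sum_Ico_mul_M_le (hsol : IsSol k p q r α (Ico 0 T) x M) (hk : ∀ i, 0 ≤ k i)
    (hp : ∀ i, 0 ≤ p i) (hq : ∀ i, 0 ≤ q i) {w : ℕ → ℝ} (hw0 : ∀ i, 0 ≤ w i)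
    (hw : ∀ i, w i ≤ momentCoeff k p q i)
    (hmono : ∀ᶠ i in atTop, w i ≤ w (i + 1))
    (hflux : (fun i => (w (i + 1) - w i) * k i) =O[atTop] w) (htop : Tendsto w atTop atTop)
    {t₀ : ℝ} (ht₀ : t₀ ∈ Ioo 0 T) {ε : ℝ} (hε : 0 < ε) :
    ∃ m, ∀ᶠ t in 𝓝 t₀, ∀ m', ∑ i ∈ Finset.Ico m m', w i * M i t ≤ ε := by
  obtain ⟨B, hB, hBw⟩ := hflux.exists_pos
  obtain ⟨N₀, hN₀⟩ := (hmono.and hBw.bound).exists_forall_of_atTop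
  have hflux' : ∀ i ≥ N₀, (w (i + 1) - w i) * k i ≤ B * w i := fun i hi => by
    simpa [Real.norm_of_nonneg (hw0 i)] using (le_abs_self _).trans (hN₀ i hi).2
  obtain ⟨h, hh0, C, hwin, hxC, hgrowth⟩ :=
    hsol.exists_window hk hp hq ht₀ hB.le (div_pos hε four_pos)
  have hs₀ : t₀ - h ∈ Ico 0 T := hwin (left_mem_Icc.2 (by linarith))
  obtain ⟨n, hn, hnN₀⟩ := ((hsol.summable_mul_M hw0 hw hs₀).eventually_forall_sum_Ico_le
    (fun i => mul_nonneg (hw0 i) (hsol.M_nonneg i _ hs₀)) (div_pos hε four_pos)).and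
    (eventually_ge_atTop (max N₀ 1)) |>.exists
  have hmono' : ∀ i ≥ n, w i ≤ w (i + 1) := fun i hi => (hN₀ i (by omega)).1
  obtain ⟨m, hm⟩ := eventually_atTop.1
    ((tendsto_atTop.1 htop (2 * w n)).and (eventually_ge_atTop n))
  refine ⟨m, ?_⟩
  filter_upwards [Icc_mem_nhds (sub_lt_self t₀ hh0) (lt_add_of_pos_right t₀ hh0)] with t ht m'
  have hmain := hsol.sum_sub_mul_M_le hk hp hq hw0 hw (by omega : 1 ≤ n) hmono' hB.le
    (fun i hi => hflux' i (by omega)) m' hs₀ (hwin ht) ht.1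
    (fun u hu => hxC u ⟨hu.1, hu.2.trans ht.2⟩)
  have hinit : ∑ i ∈ Finset.Ico n m', (w i - w n) * M i (t₀ - h) ≤ ε / 4 :=
    (Finset.sum_le_sum fun i _ => mul_le_mul_of_nonneg_right (sub_le_self _ (hw0 n))
      (hsol.M_nonneg i _ hs₀)).trans (hn m')
  calc ∑ i ∈ Finset.Ico m m', w i * M i t
      ≤ 2 * ∑ i ∈ Finset.Ico n m', (w i - w n) * M i t :=
        sum_Ico_mul_le_two_mul_sum_Ico_sub_mul (fun i => hsol.M_nonneg i t (hwin ht))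
          hmono' (hm m le_rfl).2 (fun i hi => (hm i hi).1) m'
    _ ≤ ε := by linarith [hgrowth t ht]

/-- Proposition 6.2. -/
theorem continuousOn_tsum_mul_M (hsol : IsSol k p q r α (Ico 0 T) x M) (hk : ∀ i, 0 ≤ k i)
    (hp : ∀ i, 0 ≤ p i) (hq : ∀ i, 0 ≤ q i) {w : ℕ → ℝ} (hw0 : ∀ i, 0 ≤ w i)
    (hw : ∀ i, w i ≤ momentCoeff k p q i) (hmono : ∀ᶠ i in atTop, w i ≤ w (i + 1))
    (hflux : (fun i => (w (i + 1) - w i) * k i) =O[atTop] w) (htop : Tendsto w atTop atTop)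
    {c : ℕ → ℝ} (hc0 : ∀ i, 0 ≤ c i) (hc : ∀ i, c i ≤ momentCoeff k p q i) (hcw : c =O[atTop] w) :
    ContinuousOn (fun t => ∑' i, c i * M i t) (Ioo 0 T) := by
  have hM : ∀ i, ∀ t ∈ Ioo 0 T, 0 ≤ M i t := fun i t ht =>
    hsol.M_nonneg i t (Ioo_subset_Ico_self ht)
  refine continuousOn_tsum_of_forall_sum_Ico_le
    (fun i => continuousOn_const.mul ((hsol.M_cont i).mono Ioo_subset_Ico_self))
    (fun i t ht => mul_nonneg (hc0 i) (hM i t ht))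
    (fun t ht => hsol.summable_mul_M hc0 hc (Ioo_subset_Ico_self ht)) fun t₀ ht₀ ε hε => ?_
  obtain ⟨K, hK, hKc⟩ := hcw.exists_pos
  obtain ⟨N, hN⟩ := hKc.bound.exists_forall_of_atTop
  obtain ⟨m, hm⟩ := hsol.eventually_sum_Ico_mul_M_le hk hp hq hw0 hw hmono hflux htop ht₀
    (div_pos hε hK)
  refine ⟨max m N, ((hm.filter_mono nhdsWithin_le_nhds).and self_mem_nhdsWithin).mono
    fun t ⟨ht, htT⟩ m' => ?_⟩
  calc ∑ i ∈ Finset.Ico (max m N) m', c i * M i t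
      ≤ ∑ i ∈ Finset.Ico (max m N) m', K * (w i * M i t) := Finset.sum_le_sum fun i hi => by
        have hcK : c i ≤ K * w i := by
          simpa [Real.norm_of_nonneg (hc0 i), Real.norm_of_nonneg (hw0 i)] using
            hN i (le_of_max_le_right (Finset.mem_Ico.1 hi).1)
        rw [← mul_assoc]
        exact mul_le_mul_of_nonneg_right hcK (hM i t htT)
    _ ≤ K * ∑ i ∈ Finset.Ico m m', w i * M i t := by
        rw [← Finset.mul_sum]
        exact mul_le_mul_of_nonneg_left (Finset.sum_le_sum_of_subset_of_nonneg
          (Finset.Ico_subset_Ico_left (le_max_left m N))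
          fun i _ _ => mul_nonneg (hw0 i) (hM i t htT)) hK.le
    _ ≤ ε := by
        rw [← le_div_iff₀' hK]
        exact ht m'

theorem hasDerivAt_M_zero (hsol : IsSol k p q r α (Ico 0 T) x M) {t : ℝ} (ht : t ∈ Ioo 0 T) :
    HasDerivAt (M 0) (r - k 0 * x t * M 0 t - (p 0 + q 0) * M 0 t) t := by
  have hg : ContinuousOn (fun s => -(k 0 * x s * M 0 s + (p 0 + q 0) * M 0 s)) (Ico 0 T) :=
    (((continuousOn_const.mul hsol.x_cont).mul (hsol.M_cont 0)).add
      (continuousOn_const.mul (hsol.M_cont 0))).neg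
  have h := hasDerivAt_of_eqOn_add_integral isOpen_Ioo (f := M 0) (c := M 0 0) (b := r) (a := 0)
    (fun s hs => by rw [intervalIntegral.integral_neg, hsol.eq_M0 s (Ioo_subset_Ico_self hs)]; ring)
    ((hg.mono (ordConnected_Ico.uIcc_subset ⟨le_rfl, ht.1.trans ht.2⟩
      (Ioo_subset_Ico_self ht))).intervalIntegrable)
    (hg.mono Ioo_subset_Ico_self) ht
  exact h.congr_deriv (by ring)

theorem hasDerivAt_M (hsol : IsSol k p q r α (Ico 0 T) x M) {i : ℕ} (hi : 1 ≤ i) {t : ℝ}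
    (ht : t ∈ Ioo 0 T) : HasDerivAt (M i) (rhsM k p q x M i t) t := by
  have h0 : (0 : ℝ) ∈ Ico 0 T := ⟨le_rfl, ht.1.trans ht.2⟩
  simpa using hasDerivAt_of_eqOn_add_integral isOpen_Ioo (c := M i 0) (b := 0)
    (fun s hs => by rw [hsol.M_eq_add_integral hi h0 (Ioo_subset_Ico_self hs)]; ring)
    (hsol.intervalIntegrable_rhsM i h0 (Ioo_subset_Ico_self ht))
    ((hsol.continuousOn_rhsM i).mono Ioo_subset_Ico_self) ht

theorem intervalIntegrable_rhs_x (hsol : IsSol k p q r α (Ico 0 T) x M) (hk : ∀ i, 0 ≤ k i)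
    (hp : ∀ i, 0 ≤ p i) (hq : ∀ i, 0 ≤ q i)
    (hg : ContinuousOn (fun s => -(x s * ∑' i, k i * M i s) + ∑' i : ℕ, (i : ℝ) * q i * M i s)
      (Ioo 0 T)) {t : ℝ} (ht : t ∈ Ioo 0 T) :
    IntervalIntegrable (fun s => -(x s * ∑' i, k i * M i s) + ∑' i : ℕ, (i : ℝ) * q i * M i s)
      volume 0 t := by
  obtain ⟨C, hC⟩ := hsol.exists_x_le ht.2
  have hsub : Ioc 0 t ⊆ Ico 0 T := fun s hs => ⟨hs.1.le, hs.2.trans_lt ht.2⟩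
  refine ((hsol.intervalIntegrable_moment ⟨le_rfl, ht.1.trans ht.2⟩
    (Ioo_subset_Ico_self ht)).const_mul (C + 1)).mono_fun' ?_ ?_ <;> rw [uIoc_of_le ht.1.le]
  · exact (hg.mono (Ioc_subset_Ioo_right ht.2)).aestronglyMeasurable measurableSet_Ioc
  refine ae_restrict_of_forall_mem measurableSet_Ioc fun s hs => ?_
  have hx0 := hsol.x_nonneg s (hsub hs)
  have hxC := hC s (Ioc_subset_Icc_self hs)
  have hk0 : 0 ≤ ∑' i, k i * M i s :=
    tsum_nonneg fun i => mul_nonneg (hk i) (hsol.M_nonneg i s (hsub hs))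
  have hkle := hsol.tsum_mul_M_le_moment hk (k_le_momentCoeff hp hq) (hsub hs)
  have hq0 : 0 ≤ ∑' i : ℕ, (i : ℝ) * q i * M i s := tsum_nonneg fun i =>
    mul_nonneg (mul_nonneg i.cast_nonneg (hq i)) (hsol.M_nonneg i s (hsub hs))
  have hqle := hsol.tsum_mul_M_le_moment (fun i => mul_nonneg i.cast_nonneg (hq i))
    (mul_q_le_momentCoeff hk hp) (hsub hs)
  have hm0 := hsol.moment_nonneg hk hp hq (hsub hs)
  dsimp only
  rw [Real.norm_eq_abs, abs_le]
  constructor <;> nlinarith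

theorem hasDerivAt_x (hsol : IsSol k p q r α (Ico 0 T) x M) (hk : ∀ i, 0 ≤ k i)
    (hp : ∀ i, 0 ≤ p i) (hq : ∀ i, 0 ≤ q i)
    (hg : ContinuousOn (fun s => -(x s * ∑' i, k i * M i s) + ∑' i : ℕ, (i : ℝ) * q i * M i s)
      (Ioo 0 T)) {t : ℝ} (ht : t ∈ Ioo 0 T) :
    HasDerivAt x (α - x t * ∑' i, k i * M i t + ∑' i : ℕ, (i : ℝ) * q i * M i t) t :=
  (hasDerivAt_of_eqOn_add_integral isOpen_Ioo (fun s hs => hsol.eq_x s (Ioo_subset_Ico_self hs))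
    (hsol.intervalIntegrable_rhs_x hk hp hq hg ht) hg ht).congr_deriv (by ring)

end IsSol

theorem silicosis_C1_regularity_power_q_general
    (k p q : ℕ → ℝ)
    (hk : ∀ i, 0 ≤ k i) (hp : ∀ i, 0 ≤ p i) (hq : ∀ i, 0 ≤ q i)
    (r α : ℝ)
    (Ck : ℝ) (hkO : ∀ i : ℕ, k i ≤ Ck * ((i : ℝ) + 1))
    (a η : ℝ) (ha : 0 < a) (hη : 0 < η)
    (N : ℕ) (hqpow : ∀ i ≥ N, q i = a * (i : ℝ) ^ η)
    (T : ℝ) (x : ℝ → ℝ) (M : ℕ → ℝ → ℝ)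
    (hsol : IsSol k p q r α (Set.Ico 0 T) x M) :
    -- the equations hold in the classical differential sense on (0,T)
    (∀ t ∈ Set.Ioo (0:ℝ) T,
      HasDerivAt (M 0) (r - k 0 * x t * M 0 t - (p 0 + q 0) * M 0 t) t ∧
      (∀ i : ℕ, 1 ≤ i →
        HasDerivAt (M i)
          (k (i-1) * x t * M (i-1) t - k i * x t * M i t - (p i + q i) * M i t) t) ∧
      HasDerivAt x
        (α - x t * ∑' i : ℕ, k i * M i t + ∑' i : ℕ, (i : ℝ) * q i * M i t) t) ∧
    -- the derivatives are continuous on (0,T)  (so the components are C¹ there)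
    ContinuousOn (fun t => α - x t * ∑' i : ℕ, k i * M i t
      + ∑' i : ℕ, (i : ℝ) * q i * M i t) (Set.Ioo 0 T) ∧
    (∀ i : ℕ, 1 ≤ i →
      ContinuousOn (fun t => k (i-1) * x t * M (i-1) t - k i * x t * M i t
        - (p i + q i) * M i t) (Set.Ioo 0 T)) ∧
    ContinuousOn (fun t => r - k 0 * x t * M 0 t - (p 0 + q 0) * M 0 t) (Set.Ioo 0 T) := by
  have hw := natCast_mul_eventuallyEq_rpow hqpow
  have hs : 1 ≤ η + 1 := by linarith
  have hw0 : ∀ i : ℕ, 0 ≤ (i : ℝ) * q i := fun i => mul_nonneg i.cast_nonneg (hq i)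
  have hk_lin : k =O[atTop] fun i : ℕ => (i : ℝ) + 1 :=
    IsBigO.of_bound Ck (Eventually.of_forall fun i => by
      rw [Real.norm_of_nonneg (hk i), Real.norm_of_nonneg (by positivity)]
      exact hkO i)
  have hcont : ∀ c : ℕ → ℝ, (∀ i, 0 ≤ c i) → (∀ i, c i ≤ momentCoeff k p q i) →
      c =O[atTop] (fun i : ℕ => (i : ℝ) * q i) →
      ContinuousOn (fun t => ∑' i, c i * M i t) (Ioo 0 T) := fun c =>
    hsol.continuousOn_tsum_mul_M hk hp hq hw0 (mul_q_le_momentCoeff hk hp)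
      (eventually_le_succ_of_eventuallyEq_rpow ha (by linarith) hw)
      (isBigO_flux_of_eventuallyEq_rpow ha.ne' hs hw hk_lin)
      (tendsto_atTop_of_eventuallyEq_rpow ha (by linarith) hw)
  have hcont_k := hcont k hk (k_le_momentCoeff hp hq)
    (hk_lin.trans ((isBigO_add_one_rpow hs).trans (isBigO_rpow_of_eventuallyEq ha.ne' hw)))
  have hcont_q := hcont _ hw0 (mul_q_le_momentCoeff hk hp) (isBigO_refl _ _)
  have hx := hsol.x_cont.mono Ioo_subset_Ico_self
  refine ⟨fun t ht => ⟨hsol.hasDerivAt_M_zero ht, fun i hi => hsol.hasDerivAt_M hi ht,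
    hsol.hasDerivAt_x hk hp hq ((hx.mul hcont_k).neg.add hcont_q) ht⟩,
    (continuousOn_const.sub (hx.mul hcont_k)).add hcont_q,
    fun i _ => (hsol.continuousOn_rhsM i).mono Ioo_subset_Ico_self, ?_⟩
  have hM₀ := (hsol.M_cont 0).mono Ioo_subset_Ico_self
  exact (continuousOn_const.sub ((continuousOn_const.mul hx).mul hM₀)).sub
    (continuousOn_const.mul hM₀)

/-- Corollary 6.3: if `kᵢ = O(i)` and, for sufficiently large `i`,
`qᵢ = a i^η` with `a, η > 0`, then every solution on `[0,T)` has `C¹` components on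
`(0,T)` and satisfies the silicosis equations in the classical sense on `(0,T)`. -/
theorem silicosis_C1_regularity_power_q
    (k p q : ℕ → ℝ)
    (hk : ∀ i, 0 ≤ k i) (hp : ∀ i, 0 ≤ p i) (hq : ∀ i, 0 ≤ q i)
    (r α : ℝ) (hr : 0 ≤ r) (hα : 0 ≤ α)
    (Ck : ℝ) (hkO : ∀ i : ℕ, k i ≤ Ck * ((i : ℝ) + 1))
    (a η : ℝ) (ha : 0 < a) (hη : 0 < η)
    (N : ℕ) (hqpow : ∀ i ≥ N, q i = a * (i : ℝ) ^ η)
    (T : ℝ) (x : ℝ → ℝ) (M : ℕ → ℝ → ℝ)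
    (hsol : IsSol k p q r α (Set.Ico 0 T) x M) :
    -- the equations hold in the classical differential sense on (0,T)
    (∀ t ∈ Set.Ioo (0:ℝ) T,
      HasDerivAt (M 0) (r - k 0 * x t * M 0 t - (p 0 + q 0) * M 0 t) t ∧
      (∀ i : ℕ, 1 ≤ i →
        HasDerivAt (M i)
          (k (i-1) * x t * M (i-1) t - k i * x t * M i t - (p i + q i) * M i t) t) ∧
      HasDerivAt x
        (α - x t * ∑' i : ℕ, k i * M i t + ∑' i : ℕ, (i : ℝ) * q i * M i t) t) ∧
    -- the derivatives are continuous on (0,T)  (so the components are C¹ there)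
    ContinuousOn (fun t => α - x t * ∑' i : ℕ, k i * M i t
      + ∑' i : ℕ, (i : ℝ) * q i * M i t) (Set.Ioo 0 T) ∧
    (∀ i : ℕ, 1 ≤ i →
      ContinuousOn (fun t => k (i-1) * x t * M (i-1) t - k i * x t * M i t
        - (p i + q i) * M i t) (Set.Ioo 0 T)) ∧
    ContinuousOn (fun t => r - k 0 * x t * M 0 t - (p 0 + q 0) * M 0 t) (Set.Ioo 0 T) :=
  silicosis_C1_regularity_power_q_general k p q hk hp hq r α Ck hkO a η ha hη N hqpow T x M hsol
end
end
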